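/- arXiv:0812.2936 — 7 statements merged into one kernel-verified Lean document; each statement's English description precedes it below -/
import Mathlib

section
/- Let g₁, g₂ : (0,∞) → ℝ be Bernstein functions and let α, β ∈ [0,1] with α + β ≤ 1. Then the function h : (0,∞) → ℝ defined by h(x) = g₁(x^α) · g₂(x^β) is a Bernstein function. -/
open scoped BigOperators

/-- A function `f : ℝ → ℝ` is completely monotone on `(0,∞)` if it is infinitely
differentiable there and `(-1)^n f^(n)(x) ≥ 0` for all `x > 0` and `n ≥ 0`. -/
def CompletelyMonotoneOn (f : ℝ → ℝ) : Prop :=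
  (∀ x : ℝ, 0 < x → ContDiffAt ℝ (⊤ : ℕ∞) f x) ∧
  ∀ (n : ℕ) (x : ℝ), 0 < x → 0 ≤ (-1 : ℝ) ^ n * iteratedDeriv n f x

/-- A Bernstein function: nonnegative, smooth on `(0,∞)` and with completely monotone
derivative. -/
def IsBernstein (f : ℝ → ℝ) : Prop :=
  (∀ x : ℝ, 0 < x → 0 ≤ f x) ∧
  (∀ x : ℝ, 0 < x → ContDiffAt ℝ (⊤ : ℕ∞) f x) ∧
  CompletelyMonotoneOn (deriv f)

namespace BernsteinAux

/-- Working smoothness notion: smooth on `(0, ∞)`. -/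
def Sm (f : ℝ → ℝ) : Prop := ContDiffOn ℝ (⊤ : ℕ∞) f (Set.Ioi 0)

lemma sm_iff {f : ℝ → ℝ} : Sm f ↔ ∀ x : ℝ, 0 < x → ContDiffAt ℝ (⊤ : ℕ∞) f x := by
  constructor
  · intro h x hx
    exact h.contDiffAt (Ioi_mem_nhds hx)
  · intro h x hx
    exact (h x hx).contDiffWithinAt

lemma Sm.contDiffAt {f : ℝ → ℝ} (hf : Sm f) {x : ℝ} (hx : 0 < x) : ContDiffAt ℝ (⊤ : ℕ∞) f x :=
  sm_iff.1 hf x hx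

lemma Sm.deriv {f : ℝ → ℝ} (hf : Sm f) : Sm (deriv f) :=
  hf.deriv_of_isOpen isOpen_Ioi (by simp)

lemma Sm.diffAt {f : ℝ → ℝ} (hf : Sm f) {x : ℝ} (hx : 0 < x) : DifferentiableAt ℝ f x :=
  (hf.contDiffAt hx).differentiableAt (by simp)

lemma Sm.iteratedDeriv {f : ℝ → ℝ} (hf : Sm f) (n : ℕ) : Sm (iteratedDeriv n f) := by
  induction n with
  | zero => simpa [iteratedDeriv_zero] using hf
  | succ n IH => rw [iteratedDeriv_succ]; exact IH.deriv

lemma Sm.neg {f : ℝ → ℝ} (hf : Sm f) : Sm (fun y => -(f y)) := by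
  exact ContDiffOn.neg hf

lemma Sm.add {f g : ℝ → ℝ} (hf : Sm f) (hg : Sm g) : Sm (fun y => f y + g y) :=
  ContDiffOn.add hf hg

lemma Sm.mul {f g : ℝ → ℝ} (hf : Sm f) (hg : Sm g) : Sm (fun y => f y * g y) :=
  ContDiffOn.mul hf hg

lemma Sm.const_mul {f : ℝ → ℝ} (hf : Sm f) (c : ℝ) : Sm (fun y => c * f y) :=
  (contDiffOn_const).mul hf

/-- congruence for iterated derivatives of functions agreeing on `(0,∞)`. -/
lemma itd_congr {f g : ℝ → ℝ} (h : ∀ y : ℝ, 0 < y → f y = g y) (n : ℕ) {x : ℝ} (hx : 0 < x) :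
    iteratedDeriv n f x = iteratedDeriv n g x :=
  Set.EqOn.iteratedDeriv_of_isOpen (fun y hy => h y hy) isOpen_Ioi n hx

lemma itdW_eq (f : ℝ → ℝ) (n : ℕ) {x : ℝ} (hx : x ∈ Set.Ioi (0:ℝ)) :
    iteratedDerivWithin n f (Set.Ioi 0) x = iteratedDeriv n f x := by
  rw [iteratedDerivWithin_eq_iteratedFDerivWithin, iteratedDeriv_eq_iteratedFDeriv,
    iteratedFDerivWithin_of_isOpen n isOpen_Ioi hx]

lemma itd_add {f g : ℝ → ℝ} (hf : Sm f) (hg : Sm g) (n : ℕ) {x : ℝ} (hx : 0 < x) :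
    iteratedDeriv n (fun y => f y + g y) x = iteratedDeriv n f x + iteratedDeriv n g x := by
  have hx' : x ∈ Set.Ioi (0:ℝ) := hx
  have h1 := iteratedDerivWithin_add (𝕜 := ℝ) (n := n) (f := f) (g := g) hx' (uniqueDiffOn_Ioi 0)
    ((hf x hx').of_le (by exact_mod_cast le_top)) ((hg x hx').of_le (by exact_mod_cast le_top))
  rw [← itdW_eq _ n hx', ← itdW_eq f n hx', ← itdW_eq g n hx', ← h1]
  rfl

lemma itd_const_mul {f : ℝ → ℝ} (hf : Sm f) (c : ℝ) (n : ℕ) {x : ℝ} (hx : 0 < x) :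
    iteratedDeriv n (fun y => c * f y) x = c * iteratedDeriv n f x := by
  have hx' : x ∈ Set.Ioi (0:ℝ) := hx
  have h1 := iteratedDerivWithin_const_mul (𝕜 := ℝ) hx' (uniqueDiffOn_Ioi 0) c
    ((hf x hx').of_le (by exact_mod_cast (le_top : (n:ℕ∞) ≤ ⊤) : ((n : ℕ) : WithTop ℕ∞) ≤ ((⊤ : ℕ∞) : WithTop ℕ∞)))
  rw [← itdW_eq _ n hx', ← itdW_eq f n hx', h1]


lemma itd_mul {f g : ℝ → ℝ} (hf : Sm f) (hg : Sm g) (n : ℕ) {x : ℝ} (hx : 0 < x) :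
    iteratedDeriv n (fun y => f y * g y) x =
      ∑ k ∈ Finset.range (n + 1), (n.choose k : ℝ) * iteratedDeriv k f x
        * iteratedDeriv (n - k) g x := by
  induction n generalizing f g x with
  | zero => simp
  | succ n IH =>
    have hstep : ∀ y : ℝ, 0 < y →
        deriv (fun z => f z * g z) y = deriv f y * g y + f y * deriv g y := fun y hy =>
      deriv_mul (hf.diffAt hy) (hg.diffAt hy)
    rw [iteratedDeriv_succ', itd_congr hstep n hx,
      itd_add ((hf.deriv).mul hg) (hf.mul hg.deriv) n hx,
      IH hf.deriv hg hx, IH hf hg.deriv hx]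
    simp only [← iteratedDeriv_succ']
    -- Now: ∑_{k≤n} C(n,k) itd(k+1) f * itd(n-k) g + ∑_{k≤n} C(n,k) itd k f * itd(n-k+1) g
    --    = ∑_{k≤n+1} C(n+1,k) itd k f * itd(n+1-k) g
    have peel1 : ∑ k ∈ Finset.range (n + 1 + 1), ((n+1).choose k : ℝ) * iteratedDeriv k f x
        * iteratedDeriv (n + 1 - k) g x
        = (∑ k ∈ Finset.range (n + 1), ((n+1).choose (k+1) : ℝ) * iteratedDeriv (k+1) f x
            * iteratedDeriv (n - k) g x) + iteratedDeriv 0 f x * iteratedDeriv (n+1) g x := by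
      rw [Finset.sum_range_succ' (fun k => ((n+1).choose k : ℝ) * iteratedDeriv k f x
        * iteratedDeriv (n + 1 - k) g x) (n+1)]
      simp [Nat.succ_sub_succ]
    have peel2 : ∑ k ∈ Finset.range (n + 1), ((n).choose k : ℝ) * iteratedDeriv k f x
        * iteratedDeriv (n - k + 1) g x
        = (∑ k ∈ Finset.range n, ((n).choose (k+1) : ℝ) * iteratedDeriv (k+1) f x
            * iteratedDeriv (n - k) g x) + iteratedDeriv 0 f x * iteratedDeriv (n+1) g x := by
      rw [Finset.sum_range_succ' (fun k => ((n).choose k : ℝ) * iteratedDeriv k f x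
        * iteratedDeriv (n - k + 1) g x) n]
      have : ∀ k ∈ Finset.range n, ((n).choose (k+1) : ℝ) * iteratedDeriv (k+1) f x
          * iteratedDeriv (n - (k+1) + 1) g x = ((n).choose (k+1) : ℝ) * iteratedDeriv (k+1) f x
          * iteratedDeriv (n - k) g x := by
        intro k hk
        have hk' : k < n := Finset.mem_range.1 hk
        have : n - (k+1) + 1 = n - k := by omega
        rw [this]
      rw [Finset.sum_congr rfl this]
      simp
    have ext3 : ∑ k ∈ Finset.range (n+1), ((n).choose (k+1) : ℝ) * iteratedDeriv (k+1) f x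
          * iteratedDeriv (n - k) g x
        = ∑ k ∈ Finset.range n, ((n).choose (k+1) : ℝ) * iteratedDeriv (k+1) f x
          * iteratedDeriv (n - k) g x := by
      rw [Finset.sum_range_succ]
      simp [Nat.choose_succ_self]
    rw [peel1, peel2]
    have : ∀ k ∈ Finset.range (n+1), ((n+1).choose (k+1) : ℝ) * iteratedDeriv (k+1) f x
        * iteratedDeriv (n - k) g x
        = ((n).choose k : ℝ) * iteratedDeriv (k+1) f x * iteratedDeriv (n - k) g x
          + ((n).choose (k+1) : ℝ) * iteratedDeriv (k+1) f x * iteratedDeriv (n - k) g x := by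
      intro k hk
      have : (n+1).choose (k+1) = n.choose k + n.choose (k+1) := Nat.choose_succ_succ n k
      rw [this]
      push_cast
      ring
    rw [Finset.sum_congr rfl this, Finset.sum_add_distrib, ext3]
    ring

lemma mkCM {f : ℝ → ℝ} (hs : Sm f)
    (hsign : ∀ (n : ℕ) (x : ℝ), 0 < x → 0 ≤ (-1 : ℝ) ^ n * iteratedDeriv n f x) :
    CompletelyMonotoneOn f :=
  ⟨fun x hx => hs.contDiffAt hx, hsign⟩

lemma cmSm {f : ℝ → ℝ} (hf : CompletelyMonotoneOn f) : Sm f := sm_iff.2 hf.1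

lemma CM_congr {f g : ℝ → ℝ} (h : ∀ y : ℝ, 0 < y → f y = g y)
    (hg : CompletelyMonotoneOn g) : CompletelyMonotoneOn f := by
  constructor
  · intro x hx
    refine (hg.1 x hx).congr_of_eventuallyEq ?_
    filter_upwards [Ioi_mem_nhds hx] with y hy using h y hy
  · intro n x hx
    rw [itd_congr h n hx]
    exact hg.2 n x hx

lemma CM_add {f g : ℝ → ℝ} (hf : CompletelyMonotoneOn f) (hg : CompletelyMonotoneOn g) :
    CompletelyMonotoneOn (fun y => f y + g y) := by
  refine mkCM ((cmSm hf).add (cmSm hg)) fun n x hx => ?_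
  rw [itd_add (cmSm hf) (cmSm hg) n hx, mul_add]
  exact add_nonneg (hf.2 n x hx) (hg.2 n x hx)

lemma CM_smul {c : ℝ} (hc : 0 ≤ c) {f : ℝ → ℝ} (hf : CompletelyMonotoneOn f) :
    CompletelyMonotoneOn (fun y => c * f y) := by
  refine mkCM ((cmSm hf).const_mul c) fun n x hx => ?_
  rw [itd_const_mul (cmSm hf) c n hx]
  calc (0:ℝ) ≤ c * ((-1)^n * iteratedDeriv n f x) := mul_nonneg hc (hf.2 n x hx)
    _ = (-1)^n * (c * iteratedDeriv n f x) := by ring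

lemma CM_mul {f g : ℝ → ℝ} (hf : CompletelyMonotoneOn f) (hg : CompletelyMonotoneOn g) :
    CompletelyMonotoneOn (fun y => f y * g y) := by
  refine mkCM ((cmSm hf).mul (cmSm hg)) fun n x hx => ?_
  rw [itd_mul (cmSm hf) (cmSm hg) n hx, Finset.mul_sum]
  refine Finset.sum_nonneg fun k hk => ?_
  have hkn : k ≤ n := Nat.lt_succ_iff.1 (Finset.mem_range.1 hk)
  have hsgn : (-1:ℝ)^n = (-1)^k * (-1)^(n-k) := by
    rw [← pow_add, Nat.add_sub_cancel' hkn]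
  calc (0:ℝ) ≤ (n.choose k : ℝ) * (((-1)^k * iteratedDeriv k f x)
        * ((-1)^(n-k) * iteratedDeriv (n-k) g x)) :=
      mul_nonneg (by positivity) (mul_nonneg (hf.2 k x hx) (hg.2 (n-k) x hx))
    _ = (-1)^n * ((n.choose k : ℝ) * iteratedDeriv k f x * iteratedDeriv (n-k) g x) := by
      rw [hsgn]; ring

/-- `-f'` is completely monotone when `f` is. -/
lemma CM_neg_deriv {f : ℝ → ℝ} (hf : CompletelyMonotoneOn f) :
    CompletelyMonotoneOn (fun y => -(deriv f y)) := by
  refine mkCM (cmSm hf).deriv.neg fun n x hx => ?_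
  have : iteratedDeriv n (fun y => -(deriv f y)) x = -(iteratedDeriv (n+1) f x) := by
    rw [iteratedDeriv_fun_neg, ← iteratedDeriv_succ']
  rw [this]
  have := hf.2 (n+1) x hx
  calc (0:ℝ) ≤ (-1)^(n+1) * iteratedDeriv (n+1) f x := hf.2 (n+1) x hx
    _ = (-1)^n * -iteratedDeriv (n+1) f x := by ring

lemma sm_rpow (p : ℝ) : Sm (fun y : ℝ => y ^ p) :=
  sm_iff.2 fun x hx => Real.contDiffAt_rpow_const_of_ne hx.ne'

lemma itd_rpow (p : ℝ) (n : ℕ) {x : ℝ} (hx : 0 < x) :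
    iteratedDeriv n (fun y : ℝ => y ^ p) x
      = (∏ i ∈ Finset.range n, (p - i)) * x ^ (p - n) := by
  induction n generalizing p with
  | zero => simp
  | succ n IH =>
    have hstep : ∀ y : ℝ, 0 < y →
        deriv (fun z : ℝ => z ^ p) y = p * y ^ (p - 1) := fun y hy =>
      (Real.hasDerivAt_rpow_const (Or.inl hy.ne')).deriv
    rw [iteratedDeriv_succ', itd_congr hstep n hx,
      itd_const_mul (sm_rpow (p-1)) p n hx, IH (p-1)]
    rw [Finset.prod_range_succ' (fun i => (p - (i:ℝ))) n]
    have h1 : ∀ i ∈ Finset.range n, (p - ((i+1 : ℕ):ℝ)) = (p - 1 - i) := by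
      intro i _; push_cast; ring
    rw [Finset.prod_congr rfl h1]
    have h2 : p - 1 - (n:ℝ) = p - ((n+1 : ℕ):ℝ) := by push_cast; ring
    rw [h2]
    ring

lemma CM_rpow {p : ℝ} (hp : p ≤ 0) : CompletelyMonotoneOn (fun y : ℝ => y ^ p) := by
  refine mkCM (sm_rpow p) fun n x hx => ?_
  rw [itd_rpow p n hx]
  have key : (-1:ℝ)^n * ∏ i ∈ Finset.range n, (p - i) = ∏ i ∈ Finset.range n, ((i:ℝ) - p) := by
    rw [show ((-1:ℝ)^n) = ∏ _i ∈ Finset.range n, (-1:ℝ) by simp, ← Finset.prod_mul_distrib]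
    exact Finset.prod_congr rfl fun i _ => by ring
  calc (0:ℝ) ≤ (∏ i ∈ Finset.range n, ((i:ℝ) - p)) * x ^ (p - n) := by
        refine mul_nonneg (Finset.prod_nonneg fun i _ => ?_) (Real.rpow_nonneg hx.le _)
        have : (0:ℝ) ≤ (i:ℝ) := Nat.cast_nonneg i
        linarith
    _ = (-1)^n * ((∏ i ∈ Finset.range n, (p - i)) * x ^ (p - n)) := by rw [← key]; ring

/-- Complete monotonicity is preserved by composition with a positive "Bernstein-like"
function `g` (smooth on `(0,∞)`, positive there, with completely monotone derivative). -/
lemma CM_comp {f g : ℝ → ℝ} (hf : CompletelyMonotoneOn f) (hgs : Sm g)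
    (hgp : ∀ x : ℝ, 0 < x → 0 < g x) (hgd : CompletelyMonotoneOn (deriv g)) :
    CompletelyMonotoneOn (fun x => f (g x)) := by
  have hcomp : ∀ {F : ℝ → ℝ}, Sm F → Sm (fun x => F (g x)) := by
    intro F hF
    refine sm_iff.2 fun x hx => ?_
    exact (hF.contDiffAt (hgp x hx)).comp x (hgs.contDiffAt hx)
  refine mkCM (hcomp (cmSm hf)) ?_
  have key : ∀ n : ℕ, ∀ f : ℝ → ℝ, CompletelyMonotoneOn f →
      ∀ x : ℝ, 0 < x → 0 ≤ (-1 : ℝ) ^ n * iteratedDeriv n (fun y => f (g y)) x := by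
    intro n
    induction n using Nat.strong_induction_on with
    | _ n IH =>
      match n with
      | 0 =>
        intro f hf x hx
        simpa using hf.2 0 (g x) (hgp x hx)
      | (m+1) =>
        intro f hf x hx
        have hstep : ∀ y : ℝ, 0 < y →
            deriv (fun z => f (g z)) y = deriv f (g y) * deriv g y := by
          intro y hy
          have h1 : DifferentiableAt ℝ f (g y) := (cmSm hf).diffAt (hgp y hy)
          have h2 : DifferentiableAt ℝ g y := hgs.diffAt hy
          exact deriv_comp y h1 h2
        have smfg : Sm (fun y => deriv f (g y)) := hcomp (cmSm hf).deriv
        rw [iteratedDeriv_succ', itd_congr hstep m hx,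
          itd_mul smfg (cmSm hgd) m hx, Finset.mul_sum]
        refine Finset.sum_nonneg fun k hk => ?_
        have hkm : k ≤ m := Nat.lt_succ_iff.1 (Finset.mem_range.1 hk)
        -- from IH applied to -(deriv f), which is CM
        have hIH := IH k (by omega) (fun y => -(deriv f y)) (CM_neg_deriv hf) x hx
        have hneg : iteratedDeriv k (fun y => -(deriv f (g y))) x
            = -(iteratedDeriv k (fun y => deriv f (g y)) x) := iteratedDeriv_neg k _ x
        have hA : 0 ≤ (-1:ℝ)^(k+1) * iteratedDeriv k (fun y => deriv f (g y)) x := by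
          have : 0 ≤ (-1:ℝ)^k * -(iteratedDeriv k (fun y => deriv f (g y)) x) := by
            rw [← hneg]; exact hIH
          calc (0:ℝ) ≤ (-1)^k * -(iteratedDeriv k (fun y => deriv f (g y)) x) := this
            _ = (-1)^(k+1) * iteratedDeriv k (fun y => deriv f (g y)) x := by ring
        have hB : 0 ≤ (-1:ℝ)^(m-k) * iteratedDeriv (m-k) (deriv g) x := hgd.2 (m-k) x hx
        have hsgn : (-1:ℝ)^(m+1) = (-1)^(k+1) * (-1)^(m-k) := by
          rw [← pow_add]
          congr 1
          omega
        calc (0:ℝ) ≤ (m.choose k : ℝ) * (((-1)^(k+1) * iteratedDeriv k (fun y => deriv f (g y)) x)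
              * ((-1)^(m-k) * iteratedDeriv (m-k) (deriv g) x)) :=
            mul_nonneg (by positivity) (mul_nonneg hA hB)
          _ = (-1)^(m+1) * ((m.choose k : ℝ) * iteratedDeriv k (fun y => deriv f (g y)) x
              * iteratedDeriv (m-k) (deriv g) x) := by rw [hsgn]; ring
  exact fun n x hx => key n f hf x hx

lemma taylor_hasDeriv (g : ℝ → ℝ) (hg : Sm g) (n : ℕ) (ε : ℝ) {t : ℝ} (ht : 0 < t) :
    HasDerivAt (fun u => ∑ k ∈ Finset.range (n+1),
        iteratedDeriv k g u * (ε - u)^k / (k.factorial : ℝ))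
      (iteratedDeriv (n+1) g t * (ε - t)^n / (n.factorial : ℝ)) t := by
  induction n with
  | zero =>
    have hfun : (fun u => ∑ k ∈ Finset.range (0+1),
        iteratedDeriv k g u * (ε - u)^k / (k.factorial : ℝ)) = g := by
      funext u; simp
    rw [hfun]
    simpa [iteratedDeriv_one] using (hg.diffAt ht).hasDerivAt
  | succ n IH =>
    have hA : HasDerivAt (iteratedDeriv (n+1) g) (iteratedDeriv (n+2) g t) t := by
      have h := ((hg.iteratedDeriv (n+1)).diffAt ht).hasDerivAt
      rwa [← iteratedDeriv_succ] at h
    have hB : HasDerivAt (fun u : ℝ => (ε - u)^(n+1)) (-((n+1 : ℕ) * (ε - t)^n)) t := by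
      have h0 : HasDerivAt (fun u : ℝ => ε - u) (-1) t := by
        simpa using (hasDerivAt_id t).const_sub ε
      have h1 := h0.fun_pow (n+1)
      refine h1.congr_deriv ?_
      simp
    have hterm := (hA.fun_mul hB).div_const (((n+1).factorial : ℝ))
    have hsum := IH.add hterm
    have heq : (fun u => ∑ k ∈ Finset.range (n+1+1),
        iteratedDeriv k g u * (ε - u)^k / (k.factorial : ℝ))
        = fun u => (∑ k ∈ Finset.range (n+1),
            iteratedDeriv k g u * (ε - u)^k / (k.factorial : ℝ))
          + iteratedDeriv (n+1) g u * (ε - u)^(n+1) / ((n+1).factorial : ℝ) := by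
      funext u
      rw [Finset.sum_range_succ]
    rw [heq]
    refine hsum.congr_deriv ?_
    have hfac : ((n+1).factorial : ℝ) = ((n+1 : ℕ) : ℝ) * (n.factorial : ℝ) := by
      rw [Nat.factorial_succ]; push_cast; ring
    have hne : (n.factorial : ℝ) ≠ 0 := Nat.cast_ne_zero.2 (Nat.factorial_ne_zero n)
    have hne1 : ((n+1 : ℕ) : ℝ) ≠ 0 := by positivity
    rw [hfac]
    field_simp
    ring

lemma taylor_nonneg {g : ℝ → ℝ} (hgs : Sm g) (hg0 : ∀ x : ℝ, 0 < x → 0 ≤ g x)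
    (hgd : CompletelyMonotoneOn (deriv g)) (n : ℕ) {x : ℝ} (hx : 0 < x) :
    0 ≤ ∑ k ∈ Finset.range (n+1),
        iteratedDeriv k g x * ((0:ℝ) - x)^k / (k.factorial : ℝ) := by
  have main : ∀ ε ∈ Set.Ioo (0:ℝ) x, 0 ≤ ∑ k ∈ Finset.range (n+1),
      iteratedDeriv k g x * (ε - x)^k / (k.factorial : ℝ) := by
    rintro ε ⟨hε0, hεx⟩
    set ψ : ℝ → ℝ := fun u => ∑ k ∈ Finset.range (n+1),
      iteratedDeriv k g u * (ε - u)^k / (k.factorial : ℝ) with hψdef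
    have hD : ∀ t ∈ Set.Icc ε x,
        HasDerivAt ψ (iteratedDeriv (n+1) g t * (ε - t)^n / (n.factorial : ℝ)) t :=
      fun t ht => taylor_hasDeriv g hgs n ε (lt_of_lt_of_le hε0 ht.1)
    have hmono : MonotoneOn ψ (Set.Icc ε x) := by
      apply monotoneOn_of_deriv_nonneg (convex_Icc ε x)
      · exact fun t ht => (hD t ht).continuousAt.continuousWithinAt
      · intro t ht
        rw [interior_Icc] at ht
        exact ((hD t (Set.Ioo_subset_Icc_self ht)).differentiableAt).differentiableWithinAt
      · intro t ht
        rw [interior_Icc] at ht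
        have ht' : 0 < t := lt_trans hε0 ht.1
        rw [(hD t (Set.Ioo_subset_Icc_self ht)).deriv]
        have h1 : 0 ≤ (-1:ℝ)^n * iteratedDeriv (n+1) g t := by
          rw [iteratedDeriv_succ']
          exact hgd.2 n t ht'
        have h2 : (ε - t)^n = (-1:ℝ)^n * (t - ε)^n := by
          rw [show ε - t = -(t - ε) by ring, neg_pow]
        have h3 : iteratedDeriv (n+1) g t * (ε - t)^n / (n.factorial : ℝ)
            = ((-1:ℝ)^n * iteratedDeriv (n+1) g t) * (t - ε)^n / (n.factorial : ℝ) := by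
          rw [h2]; ring
        rw [h3]
        have h4 : (0:ℝ) ≤ (t - ε)^n := pow_nonneg (by linarith [ht.1]) n
        positivity
    have hle : ψ ε ≤ ψ x := hmono (Set.left_mem_Icc.2 hεx.le) (Set.right_mem_Icc.2 hεx.le) hεx.le
    have hψε : ψ ε = g ε := by
      show (∑ k ∈ Finset.range (n+1), iteratedDeriv k g ε * (ε - ε)^k / (k.factorial : ℝ)) = g ε
      rw [Finset.sum_eq_single_of_mem 0 (Finset.mem_range.2 (Nat.succ_pos n))]
      · simp
      · intro k _ hk
        simp [sub_self, zero_pow hk]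
    have := hg0 ε hε0
    rw [hψε] at hle
    linarith
  have hc : ContinuousAt (fun ε : ℝ => ∑ k ∈ Finset.range (n+1),
      iteratedDeriv k g x * (ε - x)^k / (k.factorial : ℝ)) 0 := by
    refine Continuous.continuousAt ?_
    refine continuous_finset_sum _ fun k _ => ?_
    exact (continuous_const.mul ((continuous_id.sub continuous_const).pow k)).div_const _
  have htend := hc.continuousWithinAt.tendsto (s := Set.Ioi (0:ℝ))
  refine ge_of_tendsto htend ?_
  filter_upwards [Ioo_mem_nhdsGT_of_mem (Set.left_mem_Ico.2 hx)] with ε hε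
  exact main ε hε

lemma prod_neg_one_sub (m : ℕ) :
    ∏ i ∈ Finset.range m, ((-1:ℝ) - i) = (-1)^m * (m.factorial : ℝ) := by
  induction m with
  | zero => simp
  | succ m IH =>
    rw [Finset.prod_range_succ, IH, Nat.factorial_succ]
    push_cast
    ring

lemma neg_one_pow_helper {k n : ℕ} (h : k ≤ n) : (-1:ℝ)^n * (-1)^(n-k) = (-1)^k := by
  rw [← pow_add]
  have : n + (n - k) = 2*(n-k) + k := by omega
  rw [this, pow_add, pow_mul, neg_one_sq, one_pow, one_mul]

/-- if `g` is Bernstein-like then `x ↦ g x / x` is completely monotone on `(0,∞)`. -/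
lemma CM_div_id {g : ℝ → ℝ} (hgs : Sm g) (hg0 : ∀ x : ℝ, 0 < x → 0 ≤ g x)
    (hgd : CompletelyMonotoneOn (deriv g)) :
    CompletelyMonotoneOn (fun x => g x / x) := by
  have hsm : Sm (fun x => g x / x) := by
    refine sm_iff.2 fun x hx => ?_
    exact (hgs.contDiffAt hx).div contDiffAt_id hx.ne'
  refine mkCM hsm fun n x hx => ?_
  have hrw : ∀ y : ℝ, 0 < y → g y / y = g y * y ^ (-1:ℝ) := fun y hy => by
    rw [Real.rpow_neg_one, div_eq_mul_inv]
  rw [itd_congr hrw n hx, itd_mul hgs (sm_rpow (-1)) n hx]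
  have key : (-1:ℝ)^n * ∑ k ∈ Finset.range (n+1), (n.choose k : ℝ) * iteratedDeriv k g x
      * iteratedDeriv (n-k) (fun y : ℝ => y ^ (-1:ℝ)) x
      = ((n.factorial : ℝ) * x ^ ((-1:ℝ) - n)) * ∑ k ∈ Finset.range (n+1),
        iteratedDeriv k g x * ((0:ℝ) - x)^k / (k.factorial : ℝ) := by
    rw [Finset.mul_sum, Finset.mul_sum]
    refine Finset.sum_congr rfl fun k hk => ?_
    have hkn : k ≤ n := Nat.lt_succ_iff.1 (Finset.mem_range.1 hk)
    rw [itd_rpow (-1) (n-k) hx, prod_neg_one_sub]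
    have hxcast : x ^ ((-1:ℝ) - ((n-k : ℕ) : ℝ)) = x ^ ((-1:ℝ) - n) * x ^ (k:ℕ) := by
      rw [← Real.rpow_natCast x k, ← Real.rpow_add hx]
      congr 1
      rw [Nat.cast_sub hkn]
      ring
    rw [hxcast]
    have hfac : (n.choose k : ℝ) * (k.factorial : ℝ) * ((n-k).factorial : ℝ)
        = (n.factorial : ℝ) := by
      exact_mod_cast congrArg (Nat.cast (R := ℝ)) (Nat.choose_mul_factorial_mul_factorial hkn)
    have hkne : (k.factorial : ℝ) ≠ 0 := Nat.cast_ne_zero.2 (Nat.factorial_ne_zero k)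
    have hzs : ((0:ℝ) - x)^k = (-1:ℝ)^k * x^k := by
      rw [zero_sub, neg_pow]
    rw [hzs]
    have hsgn := neg_one_pow_helper (k := k) (n := n) hkn
    field_simp
    linear_combination ((n.choose k : ℝ) * ((n-k).factorial : ℝ) * (k.factorial : ℝ)
        * iteratedDeriv k g x) * hsgn
      + ((-1:ℝ)^k * iteratedDeriv k g x) * hfac
  rw [key]
  have h1 : (0:ℝ) ≤ (n.factorial : ℝ) * x ^ ((-1:ℝ) - n) := by positivity
  exact mul_nonneg h1 (taylor_nonneg hgs hg0 hgd n hx)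

lemma rpow_deriv_CM {p : ℝ} (hp0 : 0 ≤ p) (hp1 : p ≤ 1) :
    CompletelyMonotoneOn (deriv (fun y : ℝ => y ^ p)) :=
  CM_congr (fun y hy => (Real.hasDerivAt_rpow_const (Or.inl hy.ne')).deriv)
    (CM_smul hp0 (CM_rpow (by linarith)))

end BernsteinAux

open BernsteinAux

/-- If `g₁, g₂` are Bernstein functions and `α, β ∈ [0,1]` with `α + β ≤ 1`, then
`x ↦ g₁(x^α) · g₂(x^β)` is a Bernstein function. -/
theorem stmt0 (g₁ g₂ : ℝ → ℝ) (hg₁ : IsBernstein g₁) (hg₂ : IsBernstein g₂)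
    (α β : ℝ) (hα : α ∈ Set.Icc (0 : ℝ) 1) (hβ : β ∈ Set.Icc (0 : ℝ) 1)
    (hαβ : α + β ≤ 1) :
    IsBernstein (fun x : ℝ => g₁ (x ^ α) * g₂ (x ^ β)) := by
  obtain ⟨h1pos, h1sm, h1cm⟩ := hg₁
  obtain ⟨h2pos, h2sm, h2cm⟩ := hg₂
  obtain ⟨hα0, hα1⟩ := hα
  obtain ⟨hβ0, hβ1⟩ := hβ
  have Smg₁ : Sm g₁ := sm_iff.2 h1sm
  have Smg₂ : Sm g₂ := sm_iff.2 h2sm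
  have smα : Sm (fun y : ℝ => y ^ α) := sm_rpow α
  have smβ : Sm (fun y : ℝ => y ^ β) := sm_rpow β
  have posα : ∀ y : ℝ, 0 < y → 0 < y ^ α := fun y hy => Real.rpow_pos_of_pos hy α
  have posβ : ∀ y : ℝ, 0 < y → 0 < y ^ β := fun y hy => Real.rpow_pos_of_pos hy β
  have cmdα := rpow_deriv_CM hα0 hα1
  have cmdβ := rpow_deriv_CM hβ0 hβ1
  have c1 : CompletelyMonotoneOn (fun x : ℝ => α * x ^ (α + β - 1)) :=
    CM_smul hα0 (CM_rpow (by linarith))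
  have c1' : CompletelyMonotoneOn (fun x : ℝ => β * x ^ (α + β - 1)) :=
    CM_smul hβ0 (CM_rpow (by linarith))
  have c2 : CompletelyMonotoneOn (fun x : ℝ => deriv g₁ (x ^ α)) :=
    CM_comp h1cm smα posα cmdα
  have c2' : CompletelyMonotoneOn (fun x : ℝ => deriv g₂ (x ^ β)) :=
    CM_comp h2cm smβ posβ cmdβ
  have c3 : CompletelyMonotoneOn (fun x : ℝ => g₂ (x ^ β) / x ^ β) :=
    CM_comp (CM_div_id Smg₂ h2pos h2cm) smβ posβ cmdβ
  have c3' : CompletelyMonotoneOn (fun x : ℝ => g₁ (x ^ α) / x ^ α) :=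
    CM_comp (CM_div_id Smg₁ h1pos h1cm) smα posα cmdα
  have t1 : CompletelyMonotoneOn
      (fun x : ℝ => α * x ^ (α + β - 1) * deriv g₁ (x ^ α) * (g₂ (x ^ β) / x ^ β)) :=
    CM_mul (CM_mul c1 c2) c3
  have t2 : CompletelyMonotoneOn
      (fun x : ℝ => β * x ^ (α + β - 1) * deriv g₂ (x ^ β) * (g₁ (x ^ α) / x ^ α)) :=
    CM_mul (CM_mul c1' c2') c3'
  refine ⟨?_, ?_, ?_⟩
  · intro x hx
    exact mul_nonneg (h1pos _ (posα x hx)) (h2pos _ (posβ x hx))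
  · intro x hx
    exact ((h1sm _ (posα x hx)).comp x (smα.contDiffAt hx)).mul
      ((h2sm _ (posβ x hx)).comp x (smβ.contDiffAt hx))
  · refine CM_congr (fun y hy => ?_) (CM_add t1 t2)
    have hd : deriv (fun x : ℝ => g₁ (x ^ α) * g₂ (x ^ β)) y
        = deriv g₁ (y ^ α) * (α * y ^ (α - 1)) * g₂ (y ^ β)
          + g₁ (y ^ α) * (deriv g₂ (y ^ β) * (β * y ^ (β - 1))) := by
      have hA : HasDerivAt (fun x : ℝ => g₁ (x ^ α))
          (deriv g₁ (y ^ α) * (α * y ^ (α - 1))) y :=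
        HasDerivAt.comp y ((Smg₁.diffAt (posα y hy)).hasDerivAt)
          (Real.hasDerivAt_rpow_const (Or.inl hy.ne'))
      have hB : HasDerivAt (fun x : ℝ => g₂ (x ^ β))
          (deriv g₂ (y ^ β) * (β * y ^ (β - 1))) y :=
        HasDerivAt.comp y ((Smg₂.diffAt (posβ y hy)).hasDerivAt)
          (Real.hasDerivAt_rpow_const (Or.inl hy.ne'))
      exact (hA.mul hB).deriv
    rw [hd]
    have e1 : y ^ (α + β - 1) = y ^ (α - 1) * y ^ β := by
      rw [show α + β - 1 = (α - 1) + β by ring, Real.rpow_add hy]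
    have e2 : y ^ (α + β - 1) = y ^ (β - 1) * y ^ α := by
      rw [show α + β - 1 = (β - 1) + α by ring, Real.rpow_add hy]
    have hαne : y ^ α ≠ 0 := (posα y hy).ne'
    have hβne : y ^ β ≠ 0 := (posβ y hy).ne'
    nth_rewrite 1 [e1]
    rw [e2]
    field_simp
end

section
/- Let d ∈ ℕ, let A be a real d × d matrix and let a₁, a₂ ≥ 0. Then the function ξ ↦ (1 − e^{−a₁|Aξ|})(1 − e^{−a₂|Aξ|}) is a variogram on ℝ^d. -/
open scoped BigOperators

/-- A variogram on `ℝ^d`: nonnegative at the origin, even, and conditionally negative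
definite (for complex weights summing to zero, the quadratic form is real and `≤ 0`). -/
def IsVariogram {d : ℕ} (γ : EuclideanSpace ℝ (Fin d) → ℝ) : Prop :=
  0 ≤ γ 0 ∧ (∀ ξ, γ (-ξ) = γ ξ) ∧
    ∀ (n : ℕ) (ξ : Fin n → EuclideanSpace ℝ (Fin d)) (a : Fin n → ℂ),
      (∑ i, a i) = 0 →
      (∑ i, ∑ j, a i * (γ (ξ i - ξ j) : ℂ) * (starRingEnd ℂ) (a j)).im = 0 ∧
      (∑ i, ∑ j, a i * (γ (ξ i - ξ j) : ℂ) * (starRingEnd ℂ) (a j)).re ≤ 0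

/-!
Write `Q(c) = ∑ᵢⱼ wᵢ wⱼ e^{-c‖xᵢ - xⱼ‖}`. Glasser's integral
`∫₀^∞ e^{-u² - β²/u²} du = (√π/2) e^{-2β}` gives the subordination
`e^{-cr} = (2/√π) ∫₀^∞ c e^{-c²t²} e^{-r²/(4t²)} dt`, which writes `Q(c)` as an integral of the
Gaussian quadratic forms `∑ᵢⱼ wᵢ wⱼ e^{-s‖xᵢ - xⱼ‖²}` against the weight `c e^{-c²t²}`. Those forms
are nonnegative, being built from the characteristic function of a Gaussian measure, and the weight
is subadditive in `c`; hence `Q(a₁ + a₂) ≤ Q(a₁) + Q(a₂)`. When `∑ wᵢ = 0`, expanding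
`(1 - e^{-a₁r})(1 - e^{-a₂r})` turns this into the conditional negative definiteness of the
variogram, and complex weights reduce to their real and imaginary parts because the kernel is real
and even.
-/
open MeasureTheory Real Set ProbabilityTheory

theorem sum_mul_mul_re_charFun_sub_nonneg {E : Type*} [NormedAddCommGroup E]
    [InnerProductSpace ℝ E] [MeasurableSpace E] [OpensMeasurableSpace E]
    (μ : Measure E) [IsFiniteMeasure μ] {ι : Type*} [Fintype ι] (x : ι → E) (w : ι → ℝ) :
    0 ≤ ∑ i, ∑ j, w i * w j * (charFun μ (x i - x j)).re := by
  have hre : ∀ t, (charFun μ t).re = ∫ y, cos (inner ℝ y t) ∂μ := by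
    intro t
    have hint : Integrable (fun y => Complex.exp (inner ℝ y t * Complex.I)) μ :=
      Integrable.of_bound (by fun_prop) 1
        (.of_forall fun y => by simp [Complex.norm_exp_ofReal_mul_I])
    rw [charFun_apply, ← RCLike.re_to_complex, ← integral_re hint]
    simp [Complex.exp_ofReal_mul_I_re]
  have hint : ∀ t : E, Integrable (fun y => cos (inner ℝ y t)) μ := fun t =>
    Integrable.of_bound (by fun_prop) 1 (.of_forall fun y => by simpa using abs_cos_le_one _)
  have hsq : ∀ y : E, ∑ i, ∑ j, w i * w j * cos (inner ℝ y (x i - x j)) =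
      (∑ i, w i * cos (inner ℝ y (x i))) ^ 2 + (∑ i, w i * sin (inner ℝ y (x i))) ^ 2 := by
    intro y
    simp only [inner_sub_right, cos_sub, sq, Finset.sum_mul_sum, ← Finset.sum_add_distrib]
    exact Finset.sum_congr rfl fun i _ => Finset.sum_congr rfl fun j _ => by ring
  calc (0 : ℝ) ≤ ∫ y, ∑ i, ∑ j, w i * w j * cos (inner ℝ y (x i - x j)) ∂μ :=
        integral_nonneg fun y => by rw [hsq]; positivity
    _ = ∑ i, ∑ j, w i * w j * (charFun μ (x i - x j)).re := by
      rw [integral_finsetSum _ fun i _ => integrable_finsetSum _ fun j _ => (hint _).const_mul _]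
      simp_rw [hre, ← integral_const_mul]
      exact Finset.sum_congr rfl fun i _ => integral_finsetSum _ fun j _ => (hint _).const_mul _

section Glasser

variable {β : ℝ}

lemma image_const_div_Ioi (hβ : 0 < β) : (fun u : ℝ => β / u) '' Ioi 0 = Ioi 0 := by
  refine Subset.antisymm (image_subset_iff.2 fun u hu => div_pos hβ hu) fun y hy => ?_
  exact ⟨β / y, div_pos hβ hy, div_div_cancel₀ hβ.ne'⟩

lemma injOn_const_div_Ioi (hβ : 0 < β) : InjOn (fun u : ℝ => β / u) (Ioi 0) :=
  fun u _ v _ h => by simpa [div_div_cancel₀ hβ.ne'] using congrArg (β / ·) h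

lemma hasDerivWithinAt_const_div {u : ℝ} (hu : u ≠ 0) :
    HasDerivWithinAt (fun u : ℝ => β / u) (-(β / u ^ 2)) (Ioi 0) u := by
  simpa [div_eq_mul_inv] using ((hasDerivAt_inv hu).const_mul β).hasDerivWithinAt

lemma image_sub_const_div_Ioi (hβ : 0 < β) : (fun u : ℝ => u - β / u) '' Ioi 0 = univ := by
  refine eq_univ_of_forall fun y => ?_
  have hroot : |y| < √(y ^ 2 + 4 * β) := by
    rw [← sqrt_sq_eq_abs]; exact sqrt_lt_sqrt (sq_nonneg y) (by linarith)
  have hpos : 0 < (y + √(y ^ 2 + 4 * β)) / 2 := by linarith [neg_abs_le y]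
  have hne : y + √(y ^ 2 + 4 * β) ≠ 0 := by linarith [neg_abs_le y]
  have hsq := sq_sqrt (show 0 ≤ y ^ 2 + 4 * β by positivity)
  refine ⟨_, hpos, ?_⟩
  show _ - _ = _
  field_simp
  linear_combination hsq

lemma strictMonoOn_sub_const_div_Ioi (hβ : 0 < β) :
    StrictMonoOn (fun u : ℝ => u - β / u) (Ioi 0) :=
  fun _ hu _ _ huv => sub_lt_sub huv (div_lt_div_of_pos_left hβ hu huv)

lemma hasDerivWithinAt_sub_const_div {u : ℝ} (hu : u ≠ 0) :
    HasDerivWithinAt (fun u : ℝ => u - β / u) (1 + β / u ^ 2) (Ioi 0) u := by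
  simpa [div_eq_mul_inv] using
    ((hasDerivAt_id' u).fun_sub ((hasDerivAt_inv hu).const_mul β)).hasDerivWithinAt

lemma exp_neg_sq_sub_sq_div_sq_eq {u : ℝ} (hu : u ≠ 0) :
    exp (-u ^ 2 - β ^ 2 / u ^ 2) = exp (-(2 * β)) * exp (-(u - β / u) ^ 2) := by
  rw [← exp_add]; congr 1; field_simp; ring

theorem integrable_exp_neg_sq_sub_sq_div_sq :
    Integrable fun u : ℝ => exp (-u ^ 2 - β ^ 2 / u ^ 2) := by
  refine (integrable_exp_neg_mul_sq one_pos).mono' (by fun_prop) (.of_forall fun u => ?_)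
  rw [norm_of_nonneg (exp_pos _).le, neg_one_mul]
  exact exp_le_exp.2 (by linarith [show 0 ≤ β ^ 2 / u ^ 2 by positivity])

theorem integrableOn_exp_neg_sub_div_sq :
    IntegrableOn (fun u : ℝ => exp (-(u - β / u) ^ 2)) (Ioi 0) := by
  refine ((integrable_exp_neg_sq_sub_sq_div_sq (β := β)).const_mul
    (exp (2 * β))).integrableOn.congr_fun (fun u hu => ?_) measurableSet_Ioi
  simp [exp_neg_sq_sub_sq_div_sq_eq (ne_of_gt hu), ← exp_add]

lemma abs_neg_div_sq_smul_exp_neg_sub_div_sq (hβ : 0 < β) {u : ℝ} (hu : u ∈ Ioi 0) :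
    |-(β / u ^ 2)| • exp (-(β / u - β / (β / u)) ^ 2) = β / u ^ 2 * exp (-(u - β / u) ^ 2) := by
  have hu : u ≠ 0 := ne_of_gt hu
  rw [abs_neg, abs_of_nonneg (by positivity), smul_eq_mul, div_div_cancel₀ hβ.ne',
    ← neg_sub (β / u), neg_sq]

theorem integrableOn_div_sq_mul_exp_neg_sub_div_sq (hβ : 0 < β) :
    IntegrableOn (fun u : ℝ => β / u ^ 2 * exp (-(u - β / u) ^ 2)) (Ioi 0) := by
  have h := integrableOn_image_iff_integrableOn_abs_deriv_smul measurableSet_Ioi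
    (fun u hu => hasDerivWithinAt_const_div (ne_of_gt hu)) (injOn_const_div_Ioi hβ)
    fun u => exp (-(u - β / u) ^ 2)
  rw [image_const_div_Ioi hβ] at h
  exact (h.1 integrableOn_exp_neg_sub_div_sq).congr_fun
    (fun u hu => abs_neg_div_sq_smul_exp_neg_sub_div_sq hβ hu) measurableSet_Ioi

/-- Invariance of the integrand under `u ↦ β / u`. -/
theorem integral_Ioi_div_sq_mul_exp_neg_sub_div_sq (hβ : 0 < β) :
    ∫ u in Ioi 0, β / u ^ 2 * exp (-(u - β / u) ^ 2) = ∫ u in Ioi 0, exp (-(u - β / u) ^ 2) := by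
  have h := integral_image_eq_integral_abs_deriv_smul measurableSet_Ioi
    (fun u hu => hasDerivWithinAt_const_div (ne_of_gt hu)) (injOn_const_div_Ioi hβ)
    fun u => exp (-(u - β / u) ^ 2)
  rw [image_const_div_Ioi hβ] at h
  rw [h, setIntegral_congr_fun measurableSet_Ioi
    fun u hu => abs_neg_div_sq_smul_exp_neg_sub_div_sq hβ hu]

/-- The substitution `t = u - β / u`, a bijection from `(0, ∞)` onto `ℝ`. -/
theorem integral_Ioi_one_add_div_sq_mul_exp_neg_sub_div_sq (hβ : 0 < β) :
    ∫ u in Ioi 0, (1 + β / u ^ 2) * exp (-(u - β / u) ^ 2) = √π := by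
  have h := integral_image_eq_integral_abs_deriv_smul measurableSet_Ioi
    (fun u hu => hasDerivWithinAt_sub_const_div (ne_of_gt hu))
    (strictMonoOn_sub_const_div_Ioi hβ).injOn fun t => exp (-t ^ 2)
  rw [image_sub_const_div_Ioi hβ, setIntegral_univ] at h
  have hgauss := integral_gaussian 1
  simp only [one_mul, div_one, neg_mul] at hgauss
  rw [← hgauss, h]
  refine setIntegral_congr_fun measurableSet_Ioi fun u hu => ?_
  rw [smul_eq_mul, abs_of_pos (by have := hu.out; positivity)]

theorem integral_Ioi_exp_neg_sub_div_sq (hβ : 0 < β) :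
    ∫ u in Ioi 0, exp (-(u - β / u) ^ 2) = √π / 2 := by
  have hsplit := integral_add (integrableOn_exp_neg_sub_div_sq (β := β))
    (integrableOn_div_sq_mul_exp_neg_sub_div_sq hβ)
  rw [integral_Ioi_div_sq_mul_exp_neg_sub_div_sq hβ] at hsplit
  have htotal := integral_Ioi_one_add_div_sq_mul_exp_neg_sub_div_sq hβ
  simp only [add_mul, one_mul] at htotal
  linarith

theorem integral_Ioi_exp_neg_sq_sub_sq_div_sq (hβ : 0 ≤ β) :
    ∫ u in Ioi 0, exp (-u ^ 2 - β ^ 2 / u ^ 2) = √π / 2 * exp (-(2 * β)) := by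
  rcases hβ.eq_or_lt with rfl | hβ
  · simpa using integral_gaussian_Ioi 1
  rw [setIntegral_congr_fun measurableSet_Ioi fun u hu => exp_neg_sq_sub_sq_div_sq_eq (ne_of_gt hu),
    integral_const_mul, integral_Ioi_exp_neg_sub_div_sq hβ, mul_comm]

end Glasser

theorem exp_neg_mul_eq_integral {c r : ℝ} (hc : 0 < c) (hr : 0 ≤ r) :
    exp (-(c * r)) =
      2 * c / √π * ∫ t in Ioi 0, exp (-(c * t) ^ 2) * exp (-((4 * t ^ 2)⁻¹ * r ^ 2)) := by
  have hscale := integral_comp_mul_left_Ioi (fun u => exp (-u ^ 2 - (c * r / 2) ^ 2 / u ^ 2)) 0 hc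
  rw [mul_zero, integral_Ioi_exp_neg_sq_sub_sq_div_sq (by positivity)] at hscale
  have hsub : ∀ t ∈ Ioi (0 : ℝ), exp (-(c * t) ^ 2) * exp (-((4 * t ^ 2)⁻¹ * r ^ 2)) =
      exp (-(c * t) ^ 2 - (c * r / 2) ^ 2 / (c * t) ^ 2) := by
    intro t ht
    have : t ≠ 0 := ne_of_gt ht
    rw [← exp_add]; congr 1; field_simp; ring
  rw [setIntegral_congr_fun measurableSet_Ioi hsub, hscale, smul_eq_mul]
  have : √π ≠ 0 := (sqrt_pos.2 pi_pos).ne'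
  field_simp

theorem integrable_exp_neg_mul_sq_mul_exp_neg {c : ℝ} (hc : 0 < c) {f : ℝ → ℝ}
    (hf : Measurable f) (hf₀ : ∀ t, 0 ≤ f t) :
    Integrable fun t => exp (-(c * t) ^ 2) * exp (-f t) := by
  refine (integrable_exp_neg_mul_sq (pow_pos hc 2)).mono' (by fun_prop) (.of_forall fun t => ?_)
  rw [norm_of_nonneg (by positivity), mul_pow, neg_mul]
  exact mul_le_of_le_one_right (exp_pos _).le (exp_le_one_iff.2 (by linarith [hf₀ t]))

theorem mul_exp_neg_mul_sq_add_le {c₁ c₂ : ℝ} (hc₁ : 0 ≤ c₁) (hc₂ : 0 ≤ c₂) (t : ℝ) :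
    (c₁ + c₂) * exp (-((c₁ + c₂) * t) ^ 2) ≤
      c₁ * exp (-(c₁ * t) ^ 2) + c₂ * exp (-(c₂ * t) ^ 2) := by
  have hmono : ∀ c, 0 ≤ c → c ≤ c₁ + c₂ → exp (-((c₁ + c₂) * t) ^ 2) ≤ exp (-(c * t) ^ 2) := by
    intro c hc hle
    rw [mul_pow, mul_pow]
    gcongr
  rw [add_mul]
  exact add_le_add (mul_le_mul_of_nonneg_left (hmono c₁ hc₁ (by linarith)) hc₁)
    (mul_le_mul_of_nonneg_left (hmono c₂ hc₂ (by linarith)) hc₂)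

section QuadraticForm

variable {E : Type*} [NormedAddCommGroup E] {ι : Type*} [Fintype ι] (x : ι → E) (w : ι → ℝ)

noncomputable def gaussianQuadForm (s : ℝ) : ℝ :=
  ∑ i, ∑ j, w i * w j * exp (-(s * ‖x i - x j‖ ^ 2))

theorem gaussianQuadForm_nonneg [InnerProductSpace ℝ E] [FiniteDimensional ℝ E] {s : ℝ}
    (hs : 0 ≤ s) : 0 ≤ gaussianQuadForm x w s := by
  borelize E
  have hgauss : ∀ t : E, exp (-(s * ‖t‖ ^ 2)) = (charFun (stdGaussian E) (√(2 * s) • t)).re := by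
    intro t
    rw [charFun_stdGaussian, ← Complex.ofReal_pow, ← Complex.ofReal_neg, ← Complex.ofReal_ofNat,
      ← Complex.ofReal_div, Complex.exp_ofReal_re, norm_smul, mul_pow, Real.norm_eq_abs, sq_abs,
      sq_sqrt (by positivity)]
    ring_nf
  simp_rw [gaussianQuadForm, hgauss, smul_sub]
  exact sum_mul_mul_re_charFun_sub_nonneg _ (fun i => √(2 * s) • x i) w

theorem integrable_mul_exp_neg_mul_sq_mul_gaussianQuadForm {c : ℝ} (hc : 0 < c) :
    Integrable fun t => c * exp (-(c * t) ^ 2) * gaussianQuadForm x w (4 * t ^ 2)⁻¹ := by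
  simp only [gaussianQuadForm, Finset.mul_sum]
  refine integrable_finsetSum _ fun i _ => integrable_finsetSum _ fun j _ => ?_
  refine ((integrable_exp_neg_mul_sq_mul_exp_neg hc
    (f := fun t => (4 * t ^ 2)⁻¹ * ‖x i - x j‖ ^ 2) (by fun_prop) fun t => by positivity).const_mul
    (c * (w i * w j))).congr (.of_forall fun t => ?_)
  simp only
  ring

theorem sum_mul_mul_exp_neg_mul_norm_sub_eq_integral {c : ℝ} (hc : 0 < c) :
    ∑ i, ∑ j, w i * w j * exp (-(c * ‖x i - x j‖)) =
      2 / √π * ∫ t in Ioi 0, c * exp (-(c * t) ^ 2) * gaussianQuadForm x w (4 * t ^ 2)⁻¹ := by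
  have hint : ∀ i j, Integrable fun t => 2 / √π * (w i * w j) *
      (c * (exp (-(c * t) ^ 2) * exp (-((4 * t ^ 2)⁻¹ * ‖x i - x j‖ ^ 2)))) :=
    fun i j => ((integrable_exp_neg_mul_sq_mul_exp_neg hc
      (f := fun t => (4 * t ^ 2)⁻¹ * ‖x i - x j‖ ^ 2) (by fun_prop)
      fun t => by positivity).const_mul c).const_mul _
  calc ∑ i, ∑ j, w i * w j * exp (-(c * ‖x i - x j‖))
      = ∑ i, ∑ j, ∫ t in Ioi 0, 2 / √π * (w i * w j) *
          (c * (exp (-(c * t) ^ 2) * exp (-((4 * t ^ 2)⁻¹ * ‖x i - x j‖ ^ 2)))) := by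
        refine Finset.sum_congr rfl fun i _ => Finset.sum_congr rfl fun j _ => ?_
        rw [exp_neg_mul_eq_integral hc (norm_nonneg _), integral_const_mul, integral_const_mul]
        ring
    _ = 2 / √π * ∫ t in Ioi 0, c * exp (-(c * t) ^ 2) * gaussianQuadForm x w (4 * t ^ 2)⁻¹ := by
        rw [Finset.sum_congr rfl fun i _ =>
            (integral_finsetSum _ fun j _ => (hint i j).integrableOn).symm,
          ← integral_finsetSum _ fun i _ =>
            integrable_finsetSum _ fun j _ => (hint i j).integrableOn,
          ← integral_const_mul]
        refine setIntegral_congr_fun measurableSet_Ioi fun t _ => ?_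
        simp only [gaussianQuadForm, Finset.mul_sum]
        exact Finset.sum_congr rfl fun i _ => Finset.sum_congr rfl fun j _ => by ring

theorem sum_mul_mul_exp_neg_mul_norm_sub_add_le [InnerProductSpace ℝ E] [FiniteDimensional ℝ E]
    {c₁ c₂ : ℝ} (hc₁ : 0 < c₁) (hc₂ : 0 < c₂) :
    ∑ i, ∑ j, w i * w j * exp (-((c₁ + c₂) * ‖x i - x j‖)) ≤
      ∑ i, ∑ j, w i * w j * exp (-(c₁ * ‖x i - x j‖)) +
        ∑ i, ∑ j, w i * w j * exp (-(c₂ * ‖x i - x j‖)) := by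
  have hint := fun {c : ℝ} (hc : 0 < c) =>
    (integrable_mul_exp_neg_mul_sq_mul_gaussianQuadForm x w hc).integrableOn (s := Ioi 0)
  simp only [sum_mul_mul_exp_neg_mul_norm_sub_eq_integral x w, hc₁, hc₂, add_pos, ← mul_add]
  rw [← integral_add (hint hc₁) (hint hc₂)]
  refine mul_le_mul_of_nonneg_left (setIntegral_mono_on (hint (add_pos hc₁ hc₂))
    ((hint hc₁).add (hint hc₂)) measurableSet_Ioi fun t _ => ?_) (by positivity)
  rw [← add_mul]
  exact mul_le_mul_of_nonneg_right (mul_exp_neg_mul_sq_add_le hc₁.le hc₂.le t)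
    (gaussianQuadForm_nonneg x w (by positivity))

theorem sum_mul_mul_one_sub_exp_mul_one_sub_exp_nonpos [InnerProductSpace ℝ E]
    [FiniteDimensional ℝ E] (hw : ∑ i, w i = 0) {a₁ a₂ : ℝ} (ha₁ : 0 ≤ a₁) (ha₂ : 0 ≤ a₂) :
    ∑ i, ∑ j, w i * w j *
      ((1 - exp (-a₁ * ‖x i - x j‖)) * (1 - exp (-a₂ * ‖x i - x j‖))) ≤ 0 := by
  rcases ha₁.eq_or_lt with rfl | ha₁
  · simp
  rcases ha₂.eq_or_lt with rfl | ha₂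
  · simp
  have hexpand : ∀ r : ℝ, (1 - exp (-a₁ * r)) * (1 - exp (-a₂ * r)) =
      1 - exp (-(a₁ * r)) - exp (-(a₂ * r)) + exp (-((a₁ + a₂) * r)) := by
    intro r
    rw [show -((a₁ + a₂) * r) = -a₁ * r + -a₂ * r by ring, exp_add]
    ring_nf
  have hzero : ∑ i, ∑ j, w i * w j = 0 := by rw [← Finset.sum_mul_sum, hw, zero_mul]
  simp only [hexpand, mul_add, mul_sub, mul_one, Finset.sum_add_distrib, Finset.sum_sub_distrib,
    hzero]
  linarith [sum_mul_mul_exp_neg_mul_norm_sub_add_le x w ha₁ ha₂]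

end QuadraticForm

section HermitianForm

variable {ι : Type*} [Fintype ι] (a : ι → ℂ) (g : ι → ι → ℝ)

theorem re_sum_sum_mul_ofReal_mul_conj :
    (∑ i, ∑ j, a i * (g i j : ℂ) * (starRingEnd ℂ) (a j)).re =
      ∑ i, ∑ j, (a i).re * (a j).re * g i j + ∑ i, ∑ j, (a i).im * (a j).im * g i j := by
  simp only [Complex.re_sum, ← Finset.sum_add_distrib]
  refine Finset.sum_congr rfl fun i _ => Finset.sum_congr rfl fun j _ => ?_
  simp only [Complex.mul_re, Complex.mul_im, Complex.ofReal_re, Complex.ofReal_im,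
    Complex.conj_re, Complex.conj_im]
  ring

theorem im_sum_sum_mul_ofReal_mul_conj_eq_zero (hg : ∀ i j, g i j = g j i) :
    (∑ i, ∑ j, a i * (g i j : ℂ) * (starRingEnd ℂ) (a j)).im = 0 := by
  rw [← Complex.conj_eq_iff_im]
  simp only [map_sum, map_mul, Complex.conj_conj, Complex.conj_ofReal]
  rw [Finset.sum_comm]
  refine Finset.sum_congr rfl fun i _ => Finset.sum_congr rfl fun j _ => ?_
  rw [hg]
  ring

end HermitianForm

theorem isVariogram_of_sum_mul_mul_nonpos {d : ℕ} {γ : EuclideanSpace ℝ (Fin d) → ℝ}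
    (h₀ : 0 ≤ γ 0) (hneg : ∀ ξ, γ (-ξ) = γ ξ)
    (hcnd : ∀ (n : ℕ) (ξ : Fin n → EuclideanSpace ℝ (Fin d)) (w : Fin n → ℝ),
      ∑ i, w i = 0 → ∑ i, ∑ j, w i * w j * γ (ξ i - ξ j) ≤ 0) :
    IsVariogram γ := by
  refine ⟨h₀, hneg, fun n ξ a ha => ⟨?_, ?_⟩⟩
  · exact im_sum_sum_mul_ofReal_mul_conj_eq_zero a _ fun i j => by rw [← neg_sub, hneg]
  · have hre : ∑ i, (a i).re = 0 := by rw [← Complex.re_sum, ha, Complex.zero_re]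
    have him : ∑ i, (a i).im = 0 := by rw [← Complex.im_sum, ha, Complex.zero_im]
    rw [re_sum_sum_mul_ofReal_mul_conj]
    linarith [hcnd n ξ _ hre, hcnd n ξ _ him]

theorem isVariogram_one_sub_exp_mul_one_sub_exp {d : ℕ} {E : Type*} [NormedAddCommGroup E]
    [InnerProductSpace ℝ E] [FiniteDimensional ℝ E] (L : EuclideanSpace ℝ (Fin d) →ₗ[ℝ] E)
    {a₁ a₂ : ℝ} (ha₁ : 0 ≤ a₁) (ha₂ : 0 ≤ a₂) :
    IsVariogram fun ξ => (1 - exp (-a₁ * ‖L ξ‖)) * (1 - exp (-a₂ * ‖L ξ‖)) := by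
  refine isVariogram_of_sum_mul_mul_nonpos (by simp) (fun ξ => by simp) fun n ξ w hw => ?_
  simpa only [map_sub] using
    sum_mul_mul_one_sub_exp_mul_one_sub_exp_nonpos (fun i => L (ξ i)) w hw ha₁ ha₂

/-- For any d × d matrix A and a₁, a₂ ≥ 0, the function
ξ ↦ (1 − e^{−a₁|Aξ|})(1 − e^{−a₂|Aξ|}) is a variogram on ℝ^d. -/
theorem stmt2 (d : ℕ) (A : Matrix (Fin d) (Fin d) ℝ) (a₁ a₂ : ℝ)
    (ha₁ : 0 ≤ a₁) (ha₂ : 0 ≤ a₂) :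
    IsVariogram (fun ξ : EuclideanSpace ℝ (Fin d) =>
      (1 - Real.exp (-a₁ * ‖(WithLp.equiv 2 (Fin d → ℝ)).symm (A.mulVec (WithLp.equiv 2 (Fin d → ℝ) ξ))‖)) *
      (1 - Real.exp (-a₂ * ‖(WithLp.equiv 2 (Fin d → ℝ)).symm (A.mulVec (WithLp.equiv 2 (Fin d → ℝ) ξ))‖))) :=
  isVariogram_one_sub_exp_mul_one_sub_exp (Matrix.toEuclideanLin A) ha₁ ha₂
end

section
/- Let γ : ℝ^d → ℝ be continuous and positively homogeneous of degree 1, i.e. γ(tξ) = t·γ(ξ) for all t ≥ 0 and ξ ∈ ℝ^d. Suppose that for all a₁, a₂ > 0 the function ξ ↦ (1 − e^{−a₁γ(ξ)})(1 − e^{−a₂γ(ξ)}) is a variogram on ℝ^d. Then there exists a real positive semidefinite d × d matrix A such that γ(ξ) = |Aξ| for all ξ ∈ ℝ^d. -/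
open scoped BigOperators

/-!
Put `f_a = (1 - e^{-aγ})²`. Conditional negative definiteness survives multiplication by
nonnegative constants and pointwise limits, and `f_a / a² → γ²` as `a → 0⁺`, so `γ²` is
conditionally negative definite. On the four points `±x, ±y` with weights `1, 1, -1, -1` this
gives, by the 2-homogeneity of `γ²`, one half of the parallelogram law; the substitution
`(x, y) ↦ ((x + y)/2, (x - y)/2)` gives the other. By polarization and continuity `γ²` is then a
positive semidefinite quadratic form `ξᵀ M ξ`, and `A = √M`. The sign of `γ` comes from the same
four-point inequality for `f_1` at `y = 0`: `f_1(2ξ) ≤ 4 f_1(ξ)` forces `e^{-γ(ξ)} ≤ 1`.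
-/

open Filter Topology Finset Matrix

def IsCondNegDef {E : Type*} [AddGroup E] (ψ : E → ℝ) : Prop :=
  ∀ (n : ℕ) (p : Fin n → E) (r : Fin n → ℝ), ∑ i, r i = 0 →
    ∑ i, ∑ j, r i * r j * ψ (p i - p j) ≤ 0

theorem IsVariogram.isCondNegDef {d : ℕ} {f : EuclideanSpace ℝ (Fin d) → ℝ}
    (hf : IsVariogram f) : IsCondNegDef f := by
  intro n p r hr
  have h := (hf.2.2 n p (fun i => (r i : ℂ)) (by exact_mod_cast hr)).2
  have hcast : ∑ i, ∑ j, (r i : ℂ) * (f (p i - p j) : ℂ) * starRingEnd ℂ (r j : ℂ)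
      = ((∑ i, ∑ j, r i * r j * f (p i - p j) : ℝ) : ℂ) := by
    push_cast [Complex.conj_ofReal]
    exact sum_congr rfl fun i _ => sum_congr rfl fun j _ => by ring
  rwa [hcast, Complex.ofReal_re] at h

namespace IsCondNegDef

variable {E : Type*}

theorem const_mul [AddGroup E] {ψ : E → ℝ} (hψ : IsCondNegDef ψ) {c : ℝ} (hc : 0 ≤ c) :
    IsCondNegDef (fun x => c * ψ x) := by
  intro n p r hr
  have hsum : ∑ i, ∑ j, r i * r j * (c * ψ (p i - p j))
      = c * ∑ i, ∑ j, r i * r j * ψ (p i - p j) := by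
    simp only [Finset.mul_sum]
    exact sum_congr rfl fun i _ => sum_congr rfl fun j _ => by ring
  rw [hsum]
  exact mul_nonpos_of_nonneg_of_nonpos hc (hψ n p r hr)

theorem of_tendsto [AddGroup E] {α : Type*} {l : Filter α} [l.NeBot] {F : α → E → ℝ}
    {ψ : E → ℝ} (hF : ∀ᶠ a in l, IsCondNegDef (F a))
    (hlim : ∀ x, Tendsto (fun a => F a x) l (𝓝 (ψ x))) : IsCondNegDef ψ := by
  intro n p r hr
  refine le_of_tendsto ?_ (hF.mono fun a ha => ha n p r hr)
  exact tendsto_finsetSum _ fun i _ => tendsto_finsetSum _ fun j _ =>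
    (hlim (p i - p j)).const_mul (r i * r j)

theorem add_self_add_add_self_le [AddCommGroup E] {ψ : E → ℝ} (hψ : IsCondNegDef ψ)
    (h0 : ψ 0 = 0) (heven : ∀ x, ψ (-x) = ψ x) (x y : E) :
    ψ (x + x) + ψ (y + y) ≤ 2 * ψ (x + y) + 2 * ψ (x - y) := by
  have key := hψ 4 ![x, -x, y, -y] ![1, 1, -1, -1] (by simp [Fin.sum_univ_four])
  have hsub : ∀ u v, ψ (v - u) = ψ (u - v) := fun u v => by rw [← neg_sub, heven]
  have hneg_sub : ∀ u v, ψ (-u - v) = ψ (u + v) := fun u v => by rw [← neg_add', heven]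
  have hneg_add : ∀ u v, ψ (-u + v) = ψ (u - v) := fun u v => by
    rw [neg_add_eq_sub, hsub]
  simp only [Fin.sum_univ_four, Fin.isValue, cons_val_zero, cons_val_one, Matrix.cons_val,
    mul_one, one_mul, mul_neg, neg_mul, neg_neg, neg_add_cancel, sub_neg_eq_add, sub_self, h0,
    mul_zero, zero_add, add_zero, neg_zero, hneg_sub, hneg_add, hsub x y, add_comm y x] at key
  linarith

theorem parallelogram [AddCommGroup E] [Module ℝ E] {ψ : E → ℝ} (hψ : IsCondNegDef ψ)
    (heven : ∀ x, ψ (-x) = ψ x) (hhom : ∀ t : ℝ, 0 ≤ t → ∀ x, ψ (t • x) = t ^ 2 * ψ x)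
    (x y : E) : ψ (x + y) + ψ (x - y) = 2 * ψ x + 2 * ψ y := by
  have h0 : ψ 0 = 0 := by simpa using hhom 0 le_rfl 0
  have hdouble : ∀ x, ψ (x + x) = 4 * ψ x := fun x => by
    rw [← two_smul ℝ x, hhom 2 zero_le_two]
    norm_num
  have hle : ∀ x y, 4 * ψ x + 4 * ψ y ≤ 2 * ψ (x + y) + 2 * ψ (x - y) := fun x y => by
    simpa only [hdouble] using hψ.add_self_add_add_self_le h0 heven x y
  have hge := hle ((2⁻¹ : ℝ) • (x + y)) ((2⁻¹ : ℝ) • (x - y))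
  rw [hhom _ (by norm_num), hhom _ (by norm_num),
    show (2⁻¹ : ℝ) • (x + y) + (2⁻¹ : ℝ) • (x - y) = x by module,
    show (2⁻¹ : ℝ) • (x + y) - (2⁻¹ : ℝ) • (x - y) = y by module] at hge
  linarith [hle x y]

end IsCondNegDef

theorem exists_bilinForm_of_parallelogram {E : Type*} [AddCommGroup E] [Module ℝ E]
    [TopologicalSpace E] [IsTopologicalAddGroup E] [ContinuousSMul ℝ E] {ψ : E → ℝ}
    (hcont : Continuous ψ) (hpar : ∀ x y, ψ (x + y) + ψ (x - y) = 2 * ψ x + 2 * ψ y) :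
    ∃ B : LinearMap.BilinForm ℝ E, B.IsSymm ∧ ∀ x, B x x = ψ x := by
  have h0 : ψ 0 = 0 := by
    have := hpar 0 0
    rw [add_zero, sub_zero] at this
    linarith
  have heven : ∀ x, ψ (-x) = ψ x := fun x => by
    have := hpar 0 x
    rw [zero_add, zero_sub, h0] at this
    linarith
  set b : E → E → ℝ := fun x y => (ψ (x + y) - ψ (x - y)) / 4 with hb
  have hsymm : ∀ x y, b x y = b y x := fun x y => by
    simp only [hb, add_comm x y, ← neg_sub y x, heven]
  have hzero : ∀ y, b 0 y = 0 := fun y => by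
    simp only [hb, zero_add, zero_sub, heven, sub_self, zero_div]
  have hmid : ∀ x z y, b (x + z) y + b (x - z) y = 2 * b x y := fun x z y => by
    have h1 := hpar (x + y) z
    have h2 := hpar (x - y) z
    rw [show x + y + z = x + z + y by abel, show x + y - z = x - z + y by abel] at h1
    rw [show x - y + z = x + z - y by abel, show x - y - z = x - z - y by abel] at h2
    simp only [hb]
    linarith
  have hadd : ∀ u v y, b (u + v) y = b u y + b v y := fun u v y => by
    have h1 := hmid ((2⁻¹ : ℝ) • (u + v)) ((2⁻¹ : ℝ) • (u - v)) y
    have h2 := hmid ((2⁻¹ : ℝ) • (u + v)) ((2⁻¹ : ℝ) • (u + v)) y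
    rw [show (2⁻¹ : ℝ) • (u + v) + (2⁻¹ : ℝ) • (u - v) = u by module,
      show (2⁻¹ : ℝ) • (u + v) - (2⁻¹ : ℝ) • (u - v) = v by module] at h1
    rw [show (2⁻¹ : ℝ) • (u + v) + (2⁻¹ : ℝ) • (u + v) = u + v by module, sub_self,
      hzero] at h2
    linarith
  have hsmul : ∀ (t : ℝ) x y, b (t • x) y = t * b x y := fun t x y => by
    let L : E →+ ℝ := AddMonoidHom.mk' (b · y) (hadd · · y)
    have hL : Continuous L := by
      refine Continuous.div_const (Continuous.sub ?_ ?_) 4 <;> fun_prop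
    exact (L.toRealLinearMap hL).map_smul t x
  refine ⟨LinearMap.mk₂ ℝ b hadd hsmul (fun x y z => ?_) (fun t x y => ?_), ⟨hsymm⟩, fun x => ?_⟩
  · rw [hsymm, hadd, hsymm y, hsymm z]
  · rw [hsymm, hsmul, hsymm, smul_eq_mul]
  · have := hpar x x
    rw [sub_self, h0] at this
    simp only [LinearMap.mk₂_apply, hb, sub_self, h0]
    linarith

theorem exists_posSemidef_norm_sq_eq {n : Type*} [Fintype n] [DecidableEq n]
    (B : LinearMap.BilinForm ℝ (EuclideanSpace ℝ n)) (hB : B.IsPosSemidef) :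
    ∃ A : Matrix n n ℝ, A.PosSemidef ∧ ∀ x, B x x = ‖WithLp.toLp 2 (A *ᵥ x.ofLp)‖ ^ 2 := by
  set b := (EuclideanSpace.basisFun n ℝ).toBasis
  have hB_eq : ∀ x, B x x = x.ofLp ⬝ᵥ LinearMap.toMatrix₂ b b B *ᵥ x.ofLp := fun x => by
    have hrepr : ⇑(b.repr x) = x.ofLp := rfl
    simpa [hrepr] using apply_eq_dotProduct_toMatrix₂_mulVec b b B x x
  have hM : (LinearMap.toMatrix₂ b b B).PosSemidef := by
    rw [Matrix.posSemidef_iff_dotProduct_mulVec]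
    refine ⟨?_, fun v => ?_⟩
    · ext i j
      simp [hB.isSymm.eq]
    · simpa [hB_eq] using hB.isNonneg.nonneg (WithLp.toLp 2 v)
  open scoped MatrixOrder in
  obtain ⟨S, hS, hSS⟩ : ∃ S : Matrix n n ℝ, S.PosSemidef ∧ S * S = LinearMap.toMatrix₂ b b B :=
    ⟨CFC.sqrt _, (CFC.sqrt_nonneg _).posSemidef, CFC.sqrt_mul_sqrt_self _ hM.nonneg⟩
  have hST : Sᵀ = S := (conjTranspose_eq_transpose_of_trivial S).symm.trans hS.isHermitian
  refine ⟨S, hS, fun x => ?_⟩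
  rw [hB_eq, ← real_inner_self_eq_norm_sq, EuclideanSpace.inner_eq_star_dotProduct, star_trivial,
    ← hSS, ← mulVec_mulVec, dotProduct_mulVec, ← mulVec_transpose, hST]

theorem tendsto_one_sub_exp_neg_mul_div (t : ℝ) :
    Tendsto (fun a => (1 - Real.exp (-a * t)) / a) (𝓝[>] 0) (𝓝 t) := by
  have hderiv : HasDerivAt (fun a => 1 - Real.exp (-a * t)) t 0 := by
    simpa using ((hasDerivAt_neg' 0).mul_const t).exp.const_sub 1
  simpa [div_eq_inv_mul] using hderiv.tendsto_slope_zero_right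

section

variable {d : ℕ} {γ : EuclideanSpace ℝ (Fin d) → ℝ}

theorem nonneg_of_isVariogram_one_sub_exp (hhom : ∀ t : ℝ, 0 ≤ t → ∀ ξ, γ (t • ξ) = t * γ ξ)
    (h : IsVariogram fun ξ => (1 - Real.exp (-1 * γ ξ)) * (1 - Real.exp (-1 * γ ξ)))
    (ξ : EuclideanSpace ℝ (Fin d)) : 0 ≤ γ ξ := by
  have hγ0 : γ 0 = 0 := by simpa using hhom 0 le_rfl 0
  have key := h.isCondNegDef.add_self_add_add_self_le (by simp [hγ0]) h.2.1 ξ 0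
  have hdouble : γ (ξ + ξ) = 2 * γ ξ := by rw [← two_smul ℝ ξ, hhom 2 zero_le_two]
  have hexp : Real.exp (-γ (ξ + ξ)) = Real.exp (-γ ξ) ^ 2 := by
    rw [hdouble, ← Real.exp_nat_mul]
    ring_nf
  simp only [add_zero, sub_zero, neg_one_mul, hexp] at key
  by_contra hneg
  have hu : 1 < Real.exp (-γ ξ) := Real.one_lt_exp_iff.mpr (by linarith)
  nlinarith [mul_pos (sub_pos.2 hu) (sub_pos.2 hu)]

theorem even_of_isVariogram_one_sub_exp (hnonneg : ∀ ξ, 0 ≤ γ ξ)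
    (h : IsVariogram fun ξ => (1 - Real.exp (-1 * γ ξ)) * (1 - Real.exp (-1 * γ ξ)))
    (ξ : EuclideanSpace ℝ (Fin d)) : γ (-ξ) = γ ξ := by
  have hfactor : ∀ ξ, 0 ≤ 1 - Real.exp (-1 * γ ξ) := fun ξ => by
    simpa using hnonneg ξ
  have := (mul_self_inj (hfactor (-ξ)) (hfactor ξ)).mp (h.2.1 ξ)
  simpa using this

theorem isCondNegDef_sq_of_isVariogram_one_sub_exp (h : ∀ a : ℝ, 0 < a →
      IsVariogram fun ξ => (1 - Real.exp (-a * γ ξ)) * (1 - Real.exp (-a * γ ξ))) :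
    IsCondNegDef fun ξ => γ ξ ^ 2 := by
  refine IsCondNegDef.of_tendsto (l := 𝓝[>] 0) (eventually_mem_nhdsWithin.mono fun a ha =>
    (h a ha).isCondNegDef.const_mul (inv_nonneg.2 (sq_nonneg a))) fun ξ => ?_
  refine ((tendsto_one_sub_exp_neg_mul_div (γ ξ)).pow 2).congr fun a => ?_
  ring

end

/-- If γ is continuous, positively homogeneous of degree 1, and for all a₁, a₂ > 0 the
function ξ ↦ (1 − e^{−a₁γ(ξ)})(1 − e^{−a₂γ(ξ)}) is a variogram, then γ(ξ) = |Aξ| for some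
positive semidefinite matrix A. -/
theorem stmt3 {d : ℕ} (γ : EuclideanSpace ℝ (Fin d) → ℝ) (hcont : Continuous γ)
    (hhom : ∀ t : ℝ, 0 ≤ t → ∀ ξ, γ (t • ξ) = t * γ ξ)
    (h : ∀ a₁ a₂ : ℝ, 0 < a₁ → 0 < a₂ →
      IsVariogram (fun ξ => (1 - Real.exp (-a₁ * γ ξ)) * (1 - Real.exp (-a₂ * γ ξ)))) :
    ∃ A : Matrix (Fin d) (Fin d) ℝ, A.PosSemidef ∧
      ∀ ξ : EuclideanSpace ℝ (Fin d),
        γ ξ = ‖(WithLp.equiv 2 (Fin d → ℝ)).symm (A.mulVec (WithLp.equiv 2 (Fin d → ℝ) ξ))‖ := by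
  have hnonneg := nonneg_of_isVariogram_one_sub_exp hhom (h 1 1 one_pos one_pos)
  have heven := even_of_isVariogram_one_sub_exp hnonneg (h 1 1 one_pos one_pos)
  have hpar := (isCondNegDef_sq_of_isVariogram_one_sub_exp fun a ha => h a a ha ha).parallelogram
    (fun ξ => by rw [heven]) (fun t ht ξ => by rw [hhom t ht, mul_pow])
  obtain ⟨B, hBsymm, hB⟩ := exists_bilinForm_of_parallelogram (hcont.pow 2) hpar
  obtain ⟨A, hA, hAB⟩ := exists_posSemidef_norm_sq_eq B
    ⟨hBsymm, ⟨fun ξ => hB ξ ▸ sq_nonneg (γ ξ)⟩⟩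
  refine ⟨A, hA, fun ξ => ?_⟩
  rw [← pow_left_inj₀ (hnonneg ξ) (norm_nonneg _) two_ne_zero]
  exact (hB ξ).symm.trans (hAB ξ)
end

section
/- Let γ : ℝ^d → ℝ be a continuous variogram and fix η ∈ ℝ^d. Then the function ξ ↦ γ(ξ + η) + γ(ξ − η) − 2γ(ξ) is a continuous positive definite function on ℝ^d. -/
open scoped BigOperators

/-- A (real-valued) positive definite function on ℝ^d: for all complex weights the
quadratic form is real and nonnegative. -/
def IsPosDefFn {d : ℕ} (C : EuclideanSpace ℝ (Fin d) → ℝ) : Prop :=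
  ∀ (n : ℕ) (ξ : Fin n → EuclideanSpace ℝ (Fin d)) (a : Fin n → ℂ),
    (∑ i, ∑ j, a i * (C (ξ i - ξ j) : ℂ) * (starRingEnd ℂ) (a j)).im = 0 ∧
    0 ≤ (∑ i, ∑ j, a i * (C (ξ i - ξ j) : ℂ) * (starRingEnd ℂ) (a j)).re

open scoped ComplexConjugate

/-
Doubling the configuration `ξ₁, …, ξₙ` to `ξ₁, …, ξₙ, ξ₁ + η, …, ξₙ + η` with weights
`a₁, …, aₙ, -a₁, …, -aₙ` gives weights summing to zero, and the variogram form of the doubled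
configuration is exactly minus the form of `ξ ↦ γ(ξ + η) + γ(ξ - η) - 2γ(ξ)` at `ξ` with weights `a`.
Conditional negative definiteness of `γ` therefore yields positive definiteness of the latter.
-/

theorem Fin.sum_addCases_neg {M : Type*} [AddCommGroup M] {n : ℕ} (a : Fin n → M) :
    ∑ i, (Fin.addCases a fun i => -a i : Fin (n + n) → M) i = 0 := by
  simp [Fin.sum_univ_add, -Fin.natAdd_eq_addNat]

section KernelForm

variable {E : Type*} [AddCommGroup E]

def kernelForm (C : E → ℝ) {n : ℕ} (ξ : Fin n → E) (a : Fin n → ℂ) : ℂ :=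
  ∑ i, ∑ j, a i * (C (ξ i - ξ j) : ℂ) * conj (a j)

theorem kernelForm_addCases_translate_neg (γ : E → ℝ) (η : E) {n : ℕ} (ξ : Fin n → E)
    (a : Fin n → ℂ) :
    kernelForm γ (Fin.addCases ξ fun i => ξ i + η) (Fin.addCases a fun i => -a i) =
      -kernelForm (fun x => γ (x + η) + γ (x - η) - 2 * γ x) ξ a := by
  simp only [kernelForm, Fin.sum_univ_add, Fin.addCases_left, Fin.addCases_right, map_neg,
    ← Finset.sum_neg_distrib, ← Finset.sum_add_distrib]
  refine Finset.sum_congr rfl fun i _ => Finset.sum_congr rfl fun j _ => ?_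
  rw [show ξ i - (ξ j + η) = ξ i - ξ j - η by abel, show ξ i + η - ξ j = ξ i - ξ j + η by abel,
    add_sub_add_right_eq_sub]
  push_cast
  ring

end KernelForm

theorem IsVariogram.isPosDefFn_secondDifference {d : ℕ} {γ : EuclideanSpace ℝ (Fin d) → ℝ}
    (hγ : IsVariogram γ) (η : EuclideanSpace ℝ (Fin d)) :
    IsPosDefFn fun ξ => γ (ξ + η) + γ (ξ - η) - 2 * γ ξ := by
  intro n ξ a
  obtain ⟨him, hre⟩ := hγ.2.2 (n + n) (Fin.addCases ξ fun i => ξ i + η)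
    (Fin.addCases a fun i => -a i) (Fin.sum_addCases_neg a)
  have hform := kernelForm_addCases_translate_neg γ η ξ a
  simp only [kernelForm] at hform
  rw [hform, Complex.neg_im, neg_eq_zero] at him
  rw [hform, Complex.neg_re, neg_nonpos] at hre
  exact ⟨him, hre⟩

/-- If γ is a continuous variogram and η is fixed, then
ξ ↦ γ(ξ+η) + γ(ξ−η) − 2γ(ξ) is a continuous positive definite function. -/
theorem stmt11 {d : ℕ} (γ : EuclideanSpace ℝ (Fin d) → ℝ)
    (hγ : IsVariogram γ) (hc : Continuous γ) (η : EuclideanSpace ℝ (Fin d)) :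
    Continuous (fun ξ : EuclideanSpace ℝ (Fin d) => γ (ξ + η) + γ (ξ - η) - 2 * γ ξ) ∧
    IsPosDefFn (fun ξ : EuclideanSpace ℝ (Fin d) => γ (ξ + η) + γ (ξ - η) - 2 * γ ξ) :=
  ⟨by fun_prop, hγ.isPosDefFn_secondDifference η⟩
end

section
/- Let γ : ℝ^d → ℝ be a variogram. If γ(y) = γ(0) for some y ∈ ℝ^d, then γ(ξ + y) = γ(ξ) for all ξ ∈ ℝ^d, i.e. γ is periodic with period y. -/
open scoped BigOperators

lemma eq_zero_of_forall_add_mul_nonpos {a c : ℝ} (h : ∀ b : ℝ, a + b * c ≤ 0) : c = 0 := by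
  by_contra hc
  have := h ((1 - a) / c)
  rw [div_mul_cancel₀ _ hc] at this
  linarith

namespace IsVariogram

variable {d : ℕ} {γ : EuclideanSpace ℝ (Fin d) → ℝ}

lemma sum_sum_real_nonpos (hγ : IsVariogram γ) {n : ℕ} (ξ : Fin n → EuclideanSpace ℝ (Fin d))
    (c : Fin n → ℝ) (hc : ∑ i, c i = 0) :
    ∑ i, ∑ j, c i * γ (ξ i - ξ j) * c j ≤ 0 := by
  have h := (hγ.2.2 n ξ (fun i => (c i : ℂ)) (by exact_mod_cast hc)).2
  simp only [Complex.conj_ofReal] at h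
  exact_mod_cast h

/-- The form at the points `0, s, y` with weights `-(1 + b), 1, b` equals
`2 (γ 0 - γ s + b (γ (s - y) - γ s))` once `γ y = γ 0`. -/
lemma apply_zero_sub_apply_add_mul_nonpos (hγ : IsVariogram γ) {y : EuclideanSpace ℝ (Fin d)}
    (hy : γ y = γ 0) (s : EuclideanSpace ℝ (Fin d)) (b : ℝ) :
    γ 0 - γ s + b * (γ (s - y) - γ s) ≤ 0 := by
  have h := hγ.sum_sum_real_nonpos ![0, s, y] ![-(1 + b), 1, b]
    (by simp [Fin.sum_univ_three])
  simp only [Fin.sum_univ_three, Matrix.cons_val_zero, Matrix.cons_val_one,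
    Matrix.cons_val_two, Matrix.head_cons, Matrix.tail_cons, sub_self, zero_sub, sub_zero,
    hγ.2.1, ← neg_sub s y, hy] at h
  linear_combination h / 2

lemma apply_sub_eq_of_apply_eq_apply_zero (hγ : IsVariogram γ) {y : EuclideanSpace ℝ (Fin d)}
    (hy : γ y = γ 0) (s : EuclideanSpace ℝ (Fin d)) : γ (s - y) = γ s :=
  sub_eq_zero.mp <| eq_zero_of_forall_add_mul_nonpos (hγ.apply_zero_sub_apply_add_mul_nonpos hy s)

end IsVariogram

/-- If γ is a variogram and γ(y) = γ(0) for some y, then γ is periodic with period y. -/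
theorem stmt13 {d : ℕ} (γ : EuclideanSpace ℝ (Fin d) → ℝ) (hγ : IsVariogram γ)
    (y : EuclideanSpace ℝ (Fin d)) (hy : γ y = γ 0) :
    ∀ ξ : EuclideanSpace ℝ (Fin d), γ (ξ + y) = γ ξ := by
  intro ξ
  simpa using (hγ.apply_sub_eq_of_apply_eq_apply_zero hy (ξ + y)).symm
end

section
/- Let γ : ℝ → ℝ be a variogram such that γ(x) = 0 for all x in some interval [α, α + ε] with α ∈ ℝ and ε > 0. Then γ is identically zero on ℝ. -/
open scoped BigOperators

/-- A variogram on ℝ: nonnegative at the origin, even, and conditionally negative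
definite (for complex weights summing to zero, the quadratic form is real and ≤ 0). -/
def IsVariogram1 (γ : ℝ → ℝ) : Prop :=
  0 ≤ γ 0 ∧ (∀ x, γ (-x) = γ x) ∧
    ∀ (n : ℕ) (x : Fin n → ℝ) (a : Fin n → ℂ),
      (∑ i, a i) = 0 →
      (∑ i, ∑ j, a i * (γ (x i - x j) : ℂ) * (starRingEnd ℂ) (a j)).im = 0 ∧
      (∑ i, ∑ j, a i * (γ (x i - x j) : ℂ) * (starRingEnd ℂ) (a j)).re ≤ 0

/-! The zero set of a variogram vanishing somewhere is an additive subgroup of `ℝ`: closure under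
addition comes from the quadratic form with weights `1, -2, 1` at the points `0, x, x + y`.
If it contains an interval, it is open, hence also closed, hence all of `ℝ` by connectedness. -/

theorem AddSubgroup.eq_top_of_Icc_subset (S : AddSubgroup ℝ) {a b : ℝ} (hab : a < b)
    (h : Set.Icc a b ⊆ S) : S = ⊤ := by
  have hopen : IsOpen (S : Set ℝ) :=
    S.isOpen_of_mem_nhds (Filter.mem_of_superset
      (Icc_mem_nhds (show a < (a + b) / 2 by linarith) (show (a + b) / 2 < b by linarith)) h)
  have huniv : (S : Set ℝ) = Set.univ :=
    IsClopen.eq_univ ⟨S.isClosed_of_isOpen hopen, hopen⟩ ⟨0, S.zero_mem⟩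
  exact SetLike.coe_injective (huniv.trans AddSubgroup.coe_top.symm)

namespace IsVariogram1

variable {γ : ℝ → ℝ}

theorem sum_mul_mul_nonpos (hγ : IsVariogram1 γ) {n : ℕ} (x : Fin n → ℝ) (a : Fin n → ℝ)
    (ha : ∑ i, a i = 0) : ∑ i, ∑ j, a i * a j * γ (x i - x j) ≤ 0 := by
  have := (hγ.2.2 n x (fun i => a i) (by exact_mod_cast ha)).2
  simpa [Complex.re_sum, mul_right_comm] using this

theorem apply_zero_le (hγ : IsVariogram1 γ) (x : ℝ) : γ 0 ≤ γ x := by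
  have := hγ.sum_mul_mul_nonpos ![0, x] ![1, -1] (by simp)
  simp only [Fin.sum_univ_two, Matrix.cons_val_zero, Matrix.cons_val_one, Matrix.cons_val_fin_one,
    sub_self, sub_zero, zero_sub, hγ.2.1] at this
  linarith

theorem apply_add_le (hγ : IsVariogram1 γ) (x y : ℝ) :
    γ (x + y) + 3 * γ 0 ≤ 2 * γ x + 2 * γ y := by
  have := hγ.sum_mul_mul_nonpos ![0, x, x + y] ![1, -2, 1] (by simp [Fin.sum_univ_three]; norm_num)
  have hsum : γ (-y + -x) = γ (x + y) := by rw [← neg_add_rev, hγ.2.1]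
  simp only [Fin.sum_univ_three, Matrix.cons_val_zero, Matrix.cons_val_one, Matrix.cons_val,
    sub_self, sub_zero, zero_sub, hγ.2.1, neg_add_rev, hsum, sub_add_cancel_left,
    add_sub_cancel_left] at this
  linarith

theorem apply_zero_eq_zero_of_apply_eq_zero (hγ : IsVariogram1 γ) {x : ℝ} (hx : γ x = 0) :
    γ 0 = 0 :=
  le_antisymm (hx ▸ hγ.apply_zero_le x) hγ.1

theorem apply_add_eq_zero (hγ : IsVariogram1 γ) {x y : ℝ} (hx : γ x = 0) (hy : γ y = 0) :
    γ (x + y) = 0 := by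
  have h0 := hγ.apply_zero_eq_zero_of_apply_eq_zero hx
  have := hγ.apply_add_le x y
  have := hγ.apply_zero_le (x + y)
  linarith

def zeroAddSubgroup (hγ : IsVariogram1 γ) (h0 : γ 0 = 0) : AddSubgroup ℝ where
  carrier := {x | γ x = 0}
  zero_mem' := h0
  add_mem' := hγ.apply_add_eq_zero
  neg_mem' {x} hx := (hγ.2.1 x).trans hx

end IsVariogram1

/-- A variogram on ℝ vanishing on some interval [α, α + ε] with ε > 0 is identically
zero. -/
theorem stmt14 (γ : ℝ → ℝ) (hγ : IsVariogram1 γ) (α ε : ℝ) (hε : 0 < ε)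
    (h0 : ∀ x ∈ Set.Icc α (α + ε), γ x = 0) :
    ∀ x : ℝ, γ x = 0 := by
  have hγ0 : γ 0 = 0 :=
    hγ.apply_zero_eq_zero_of_apply_eq_zero (h0 α ⟨le_rfl, by linarith⟩)
  have htop : hγ.zeroAddSubgroup hγ0 = ⊤ :=
    AddSubgroup.eq_top_of_Icc_subset _ (by linarith) h0
  exact (AddSubgroup.eq_top_iff' _).1 htop
end

section
/- Let α, β ≥ 0 and let m : (0,∞) → [0,∞) be a monotone decreasing function with ∫₀^∞ min(t, 1)·m(t) dt < ∞. For z ∈ ℂ with Re z ≥ 0 define f(z) = α + β·z + ∫₀^∞ (1 − e^{−z t}) m(t) dt (the integral converges absolutely). Then the function γ : ℝ → ℂ, γ(ξ) := −iξ·f(iξ), is conditionally negative definite: γ(0) = 0, γ(−ξ) = conj(γ(ξ)) for all ξ ∈ ℝ, and for every n ∈ ℕ, all points ξ₁, …, ξₙ ∈ ℝ and all complex numbers a₁, …, aₙ with a₁ + ⋯ + aₙ = 0 one has Re(∑_{i,j=1}^n aᵢ γ(ξᵢ − ξⱼ) conj(aⱼ)) ≤ 0. Moreover, the real-valued function ξ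 ↦ −Re(iξ·f(iξ)) is a variogram on ℝ. -/
open scoped BigOperators
open MeasureTheory

/-!
Write `γ ξ = -iξ f(iξ) = -iαξ + βξ² - iξ ∫₀^∞ (1 - e^{-iξt}) m(t) dt`. For weights with
`∑ aᵢ = 0` the form `Q g = ∑ aᵢ g(xᵢ - xⱼ) conj aⱼ` kills the linear term and sends `ξ²` to
`-2 |∑ aᵢ xᵢ|²`. For the integral term, `Q(-iξ (1 - e^{-iξt})) = -Φ'(t)` where
`Φ(t) = Q(e^{-iξt}) = |∑ aᵢ e^{-i xᵢ t}|²`, so `Re Q γ ≤ -∫₀^∞ (Re Φ)'(t) m(t) dt`.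
Writing `m(t) = ∫₀^∞ 1{s < m(t)} ds` and swapping the integrals, the last integral becomes
`∫₀^∞ (∫_{m > s} (Re Φ)') ds`; as `m` is decreasing, `{m > s}` is an interval with left end `0`
and right end some `τ`, so the inner integral is `Φ(τ) ≥ 0`.
Finally `γ(-ξ) = conj (γ ξ)`, so `Re γ` is the average of `γ` and its reflection, and the
reflection corresponds to conjugating the weights.
-/

open Complex Set ComplexConjugate

section DecreasingWeight

variable {m F F' : ℝ → ℝ}

lemma exists_lt_le_of_integrableOn_Ioi {a s : ℝ} (hm : IntegrableOn m (Ioi a)) (hs : 0 < s) :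
    ∃ R, a < R ∧ m R ≤ s := by
  by_contra! h
  have hconst : IntegrableOn (fun _ => s) (Ioi a) := by
    refine hm.mono' aestronglyMeasurable_const ?_
    filter_upwards [ae_restrict_mem measurableSet_Ioi] with t ht
    rw [Real.norm_eq_abs, abs_of_pos hs]
    exact (h t ht).le
  rcases (integrableOn_const_iff (C := s)).mp hconst with h0 | hfin
  · exact hs.ne' (enorm_eq_zero.mp h0)
  · simp at hfin

lemma setIntegral_deriv_nonneg_of_initialSegment (hderiv : ∀ t, HasDerivAt F (F' t) t)
    (hF' : Continuous F') (hF0 : F 0 = 0) (hF : ∀ t, 0 < t → 0 ≤ F t) {T : Set ℝ}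
    (hT : T ⊆ Ioi 0) (hT_init : ∀ t ∈ T, Ioc 0 t ⊆ T) (hT_bdd : BddAbove T) :
    0 ≤ ∫ t in T, F' t := by
  rcases T.eq_empty_or_nonempty with rfl | ⟨t₀, ht₀⟩
  · simp
  set τ := sSup T
  have hτ : 0 < τ := (hT ht₀).trans_le (le_csSup hT_bdd ht₀)
  have hT_sub : T ⊆ Ioc 0 τ := fun t ht => ⟨hT ht, le_csSup hT_bdd ht⟩
  have hT_sup : Ioo 0 τ ⊆ T := fun u hu => by
    obtain ⟨t, ht, hut⟩ := exists_lt_of_lt_csSup ⟨t₀, ht₀⟩ hu.2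
    exact hT_init t ht ⟨hu.1, hut.le⟩
  have hae : T =ᵐ[volume] Ioc 0 τ :=
    hT_sub.eventuallyLE.antisymm (Ioo_ae_eq_Ioc.symm.le.trans hT_sup.eventuallyLE)
  rw [setIntegral_congr_set hae, ← intervalIntegral.integral_of_le hτ.le,
    intervalIntegral.integral_eq_sub_of_hasDerivAt (fun t _ => hderiv t)
      (hF'.intervalIntegrable 0 τ), hF0, sub_zero]
  exact hF τ hτ

lemma setIntegral_Ioi_indicator_Ioo (c : ℝ) {y : ℝ} (hy : 0 ≤ y) :
    ∫ s in Ioi (0:ℝ), (Ioo 0 y).indicator (fun _ => c) s = c * y := by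
  rw [integral_indicator measurableSet_Ioo, Measure.restrict_restrict measurableSet_Ioo,
    inter_eq_left.mpr Ioo_subset_Ioi_self, setIntegral_const, smul_eq_mul,
    Real.volume_real_Ioo_of_le hy, sub_zero, mul_comm]

theorem setIntegral_deriv_mul_antitoneOn_nonneg (hm_nonneg : ∀ t, 0 < t → 0 ≤ m t)
    (hm_mono : AntitoneOn m (Ioi 0)) (hm_tail : IntegrableOn m (Ioi 1))
    (hderiv : ∀ t, HasDerivAt F (F' t) t) (hF' : Continuous F') (hF0 : F 0 = 0)
    (hF : ∀ t, 0 < t → 0 ≤ F t) (hint : IntegrableOn (fun t => F' t * m t) (Ioi 0)) :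
    0 ≤ ∫ t in Ioi 0, F' t * m t := by
  set μ := volume.restrict (Ioi (0:ℝ))
  set g : ℝ × ℝ → ℝ := {p | p.2 ∈ Ioo 0 (m p.1)}.indicator (fun p => F' p.1)
  have hg_meas : AEStronglyMeasurable g (μ.prod μ) := by
    have hm_meas : AEMeasurable m μ :=
      aemeasurable_restrict_of_antitoneOn measurableSet_Ioi hm_mono
    refine (hF'.comp continuous_fst).aestronglyMeasurable.indicator₀ ?_
    have h_pos : NullMeasurableSet {p : ℝ × ℝ | 0 < p.2} (μ.prod μ) :=
      measurableSet_lt measurable_const measurable_snd |>.nullMeasurableSet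
    have h_lt : NullMeasurableSet {p : ℝ × ℝ | p.2 < m p.1} (μ.prod μ) :=
      nullMeasurableSet_lt (f := fun p : ℝ × ℝ => p.2) (g := fun p => m p.1)
        measurable_snd.aemeasurable hm_meas.comp_fst
    exact h_pos.inter h_lt
  have hg_section : ∀ t, 0 < t → ∫ s, ‖g (t, s)‖ ∂μ = ‖F' t * m t‖ := fun t ht => by
    have := setIntegral_Ioi_indicator_Ioo (‖F' t‖) (hm_nonneg t ht)
    simp only [g, norm_indicator_eq_indicator_norm]
    rw [norm_mul, Real.norm_of_nonneg (hm_nonneg t ht), ← this]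
    rfl
  have hg_int : Integrable g (μ.prod μ) := by
    refine (integrable_prod_iff hg_meas).2 ⟨Filter.Eventually.of_forall fun t => ?_, ?_⟩
    · exact ((integrableOn_const (C := F' t)
        (measure_Ioo_lt_top (μ := volume) (a := 0) (b := m t)).ne).integrable_indicator
        measurableSet_Ioo).integrableOn
    · refine hint.norm.congr ?_
      filter_upwards [ae_restrict_mem measurableSet_Ioi] with t ht
      exact (hg_section t ht).symm
  calc 0 ≤ ∫ s, ∫ t, g (t, s) ∂μ ∂μ := by
        refine setIntegral_nonneg measurableSet_Ioi fun s (hs : 0 < s) => ?_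
        set T := {t | 0 < t ∧ s < m t}
        have hT_init : ∀ t ∈ T, Ioc 0 t ⊆ T := fun t ht u hu =>
          ⟨hu.1, ht.2.trans_le (hm_mono hu.1 ht.1 hu.2)⟩
        have hT_meas : MeasurableSet T := OrdConnected.measurableSet
          ⟨fun t ht u hu v hv => hT_init u hu ⟨ht.1.trans_le hv.1, hv.2⟩⟩
        have hT_bdd : BddAbove T := by
          obtain ⟨R, hR, hmR⟩ := exists_lt_le_of_integrableOn_Ioi hm_tail hs
          refine ⟨R, fun t ht => ?_⟩
          by_contra! hRt
          exact (hmR.trans_lt ht.2).not_ge (hm_mono (one_pos.trans hR) ht.1 hRt.le)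
        have hg_eq : EqOn (fun t => g (t, s)) (T.indicator F') (Ioi 0) := fun t ht => by
          simp [g, T, indicator_apply, hs, ht.out]
        rw [setIntegral_congr_fun measurableSet_Ioi hg_eq, integral_indicator hT_meas,
          Measure.restrict_restrict hT_meas, inter_eq_left.mpr fun t ht => ht.1]
        exact setIntegral_deriv_nonneg_of_initialSegment hderiv hF' hF0 hF (fun t ht => ht.1)
          hT_init hT_bdd
    _ = ∫ t, ∫ s, g (t, s) ∂μ ∂μ :=
        (integral_integral_swap (f := fun t s => g (t, s)) hg_int).symm
    _ = ∫ t in Ioi 0, F' t * m t := setIntegral_congr_fun measurableSet_Ioi fun t ht =>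
        setIntegral_Ioi_indicator_Ioo (F' t) (hm_nonneg t ht)

end DecreasingWeight

section QuadForm

variable {ι : Type*} [Fintype ι] (a : ι → ℂ) (x : ι → ℝ)

def quadForm (g : ℝ → ℂ) : ℂ := ∑ i, ∑ j, a i * g (x i - x j) * conj (a j)

lemma quadForm_add (g h : ℝ → ℂ) :
    quadForm a x (fun ξ => g ξ + h ξ) = quadForm a x g + quadForm a x h := by
  simp only [quadForm, mul_add, add_mul, Finset.sum_add_distrib]

lemma quadForm_sub (g h : ℝ → ℂ) :
    quadForm a x (fun ξ => g ξ - h ξ) = quadForm a x g - quadForm a x h := by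
  simp only [quadForm, mul_sub, sub_mul, Finset.sum_sub_distrib]

lemma quadForm_const_mul (c : ℂ) (g : ℝ → ℂ) :
    quadForm a x (fun ξ => c * g ξ) = c * quadForm a x g := by
  simp only [quadForm, Finset.mul_sum]
  congr! 2 with i - j
  ring

lemma quadForm_mul_const (c : ℂ) (g : ℝ → ℂ) :
    quadForm a x (fun ξ => g ξ * c) = quadForm a x g * c := by
  simpa only [mul_comm _ c] using quadForm_const_mul a x c g

lemma quadForm_comp_neg (g : ℝ → ℂ) :
    quadForm a x (fun ξ => g (-ξ)) = quadForm (fun i => conj (a i)) x g := by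
  rw [quadForm, quadForm, Finset.sum_comm]
  congr! 2 with i - j
  rw [neg_sub, conj_conj]
  ring

lemma conj_quadForm (g : ℝ → ℂ) :
    conj (quadForm a x g) = quadForm (fun i => conj (a i)) x (fun ξ => conj (g ξ)) := by
  simp only [quadForm, map_sum, map_mul]

variable {a}

lemma quadForm_ofReal_eq_zero (ha : ∑ i, a i = 0) : quadForm a x (fun ξ => (ξ : ℂ)) = 0 := by
  have hb : ∑ j, conj (a j) = 0 := by rw [← map_sum, ha, map_zero]
  calc quadForm a x (fun ξ => (ξ : ℂ))
      = ∑ i, ∑ j, (a i * x i * conj (a j) - a i * (x j * conj (a j))) := by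
        simp only [quadForm, ofReal_sub]
        congr! 2 with i - j
        ring
    _ = (∑ i, a i * x i) * ∑ j, conj (a j) - (∑ i, a i) * ∑ j, x j * conj (a j) := by
        simp only [Finset.sum_sub_distrib, Finset.sum_mul_sum]
    _ = 0 := by rw [ha, hb]; ring

lemma quadForm_ofReal_sq (ha : ∑ i, a i = 0) :
    quadForm a x (fun ξ => (ξ : ℂ) ^ 2) = -2 * normSq (∑ i, a i * x i) := by
  have hb : ∑ j, conj (a j) = 0 := by rw [← map_sum, ha, map_zero]
  calc quadForm a x (fun ξ => (ξ : ℂ) ^ 2)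
      = ∑ i, ∑ j, (a i * x i ^ 2 * conj (a j) + a i * (x j ^ 2 * conj (a j))
          - 2 * (a i * x i * (x j * conj (a j)))) := by
        simp only [quadForm, ofReal_sub]
        congr! 2 with i - j
        ring
    _ = (∑ i, a i * x i ^ 2) * (∑ j, conj (a j)) + (∑ i, a i) * (∑ j, x j ^ 2 * conj (a j))
          - 2 * ((∑ i, a i * x i) * conj (∑ j, a j * x j)) := by
        simp only [Finset.sum_sub_distrib, Finset.sum_add_distrib, ← Finset.mul_sum,
          Finset.sum_mul_sum, map_sum, map_mul, conj_ofReal, mul_comm (conj _) (x _ : ℂ)]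
    _ = -2 * normSq (∑ i, a i * x i) := by rw [ha, hb, mul_conj]; ring

lemma quadForm_exp (t : ℝ) :
    quadForm a x (fun ξ => exp (-(I * ξ) * t)) = normSq (∑ i, a i * exp (-(I * x i) * t)) := by
  rw [← mul_conj, map_sum, Finset.sum_mul_sum, quadForm]
  congr! 2 with i - j
  rw [map_mul, ← exp_conj, mul_mul_mul_comm, ← exp_add]
  simp only [map_mul, map_neg, conj_I, conj_ofReal, ofReal_sub]
  ring_nf

lemma hasDerivAt_quadForm_exp (t : ℝ) :
    HasDerivAt (fun t : ℝ => quadForm a x (fun ξ => exp (-(I * ξ) * t)))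
      (quadForm a x (fun ξ => -(I * ξ) * exp (-(I * ξ) * t))) t := by
  refine HasDerivAt.fun_sum fun i _ => HasDerivAt.fun_sum fun j _ => ?_
  refine (HasDerivAt.const_mul _ ?_).mul_const _
  have := ((hasDerivAt_id t).ofReal_comp.const_mul (-(I * ↑(x i - x j)))).cexp
  simp only [id, ofReal_one, mul_one] at this
  rwa [mul_comm (exp _)] at this

variable {Ω : Type*} [MeasurableSpace Ω] {μ : Measure Ω} {G : ℝ → Ω → ℂ}

lemma integrable_quadForm (hG : ∀ ξ, Integrable (G ξ) μ) :
    Integrable (fun ω => quadForm a x (fun ξ => G ξ ω)) μ :=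
  integrable_finsetSum _ fun _ _ => integrable_finsetSum _ fun _ _ =>
    ((hG _).const_mul _).mul_const _

lemma integral_quadForm (hG : ∀ ξ, Integrable (G ξ) μ) :
    ∫ ω, quadForm a x (fun ξ => G ξ ω) ∂μ = quadForm a x (fun ξ => ∫ ω, G ξ ω ∂μ) := by
  unfold quadForm
  rw [integral_finsetSum _ fun _ _ => integrable_finsetSum _ fun _ _ =>
    ((hG _).const_mul _).mul_const _]
  refine Finset.sum_congr rfl fun i _ => ?_
  rw [integral_finsetSum _ fun _ _ => ((hG _).const_mul _).mul_const _]
  refine Finset.sum_congr rfl fun j _ => ?_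
  rw [integral_mul_const, integral_const_mul]

end QuadForm

section Levy

variable {m : ℝ → ℝ}

noncomputable def levyIntegral (m : ℝ → ℝ) (z : ℂ) : ℂ :=
  ∫ t in Ioi (0 : ℝ), (1 - exp (-z * t)) * m t

lemma norm_one_sub_exp_neg_mul_le {z : ℂ} (hz : 0 ≤ z.re) {t : ℝ} (ht : 0 ≤ t) :
    ‖1 - exp (-z * t)‖ ≤ 2 * max ‖z‖ 1 * min t 1 := by
  have hnorm : ‖-z * t‖ = ‖z‖ * t := by simp [abs_of_nonneg ht]
  have hle : ‖1 - exp (-z * t)‖ ≤ 2 * min (‖z‖ * t) 1 := by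
    rcases le_total (‖z‖ * t) 1 with h | h
    · rw [min_eq_left h, norm_sub_rev, ← hnorm]
      exact norm_exp_sub_one_le (hnorm ▸ h)
    · have : ‖exp (-z * t)‖ ≤ 1 := by
        rw [norm_exp, Real.exp_le_one_iff]
        simpa using mul_nonneg hz ht
      rw [min_eq_right h]
      linarith [norm_sub_le (1 : ℂ) (exp (-z * t)), norm_one (α := ℂ)]
  have hmin : min (‖z‖ * t) 1 ≤ max ‖z‖ 1 * min t 1 := by
    rcases le_total t 1 with h | h
    · rw [min_eq_left h]
      exact (min_le_left _ _).trans (mul_le_mul_of_nonneg_right (le_max_left _ _) ht)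
    · rw [min_eq_right h, mul_one]
      exact (min_le_right _ _).trans (le_max_right _ _)
  linarith

lemma integrableOn_levyIntegrand (hm_nonneg : ∀ t, 0 < t → 0 ≤ m t)
    (hm_mono : AntitoneOn m (Ioi 0)) (hm_int : IntegrableOn (fun t => min t 1 * m t) (Ioi 0))
    {z : ℂ} (hz : 0 ≤ z.re) :
    IntegrableOn (fun t : ℝ => (1 - exp (-z * t)) * (m t : ℂ)) (Ioi 0) := by
  have hm_meas : AEStronglyMeasurable m (volume.restrict (Ioi 0)) :=
    (aemeasurable_restrict_of_antitoneOn measurableSet_Ioi hm_mono).aestronglyMeasurable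
  refine (hm_int.const_mul (2 * max ‖z‖ 1)).mono' ?_ ?_
  · exact (by fun_prop : Continuous fun t : ℝ => 1 - exp (-z * t)).aestronglyMeasurable.mul
      (continuous_ofReal.comp_aestronglyMeasurable hm_meas)
  · filter_upwards [ae_restrict_mem measurableSet_Ioi] with t (ht : 0 < t)
    rw [norm_mul, norm_real, Real.norm_of_nonneg (hm_nonneg t ht), ← mul_assoc]
    exact mul_le_mul_of_nonneg_right (norm_one_sub_exp_neg_mul_le hz ht.le) (hm_nonneg t ht)

lemma levyIntegral_conj (m : ℝ → ℝ) (z : ℂ) :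
    levyIntegral m (conj z) = conj (levyIntegral m z) := by
  rw [levyIntegral, levyIntegral, ← integral_conj]
  congr 1 with t
  simp [← exp_conj]

theorem re_quadForm_levyIntegral_nonpos {ι : Type*} [Fintype ι] {a : ι → ℂ} (x : ι → ℝ)
    (ha : ∑ i, a i = 0) (hm_nonneg : ∀ t, 0 < t → 0 ≤ m t) (hm_mono : AntitoneOn m (Ioi 0))
    (hm_int : IntegrableOn (fun t => min t 1 * m t) (Ioi 0)) :
    (quadForm a x (fun ξ => -(I * ξ) * levyIntegral m (I * ξ))).re ≤ 0 := by
  set Φ : ℝ → ℂ := fun t => quadForm a x (fun ξ => exp (-(I * ξ) * t))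
  set Φ' : ℝ → ℂ := fun t => quadForm a x (fun ξ => -(I * ξ) * exp (-(I * ξ) * t))
  have hG : ∀ ξ : ℝ, IntegrableOn
      (fun t : ℝ => -(I * ξ) * ((1 - exp (-(I * ξ) * t)) * m t)) (Ioi 0) := fun ξ =>
    (integrableOn_levyIntegrand hm_nonneg hm_mono hm_int (by simp)).const_mul _
  have hpoint : ∀ t : ℝ, quadForm a x (fun ξ => -(I * ξ) * ((1 - exp (-(I * ξ) * t)) * m t))
      = -(Φ' t * m t) := fun t => by
    calc _ = quadForm a x
          (fun ξ => (-I * m t) * ξ - -(I * ξ) * exp (-(I * ξ) * t) * m t) := by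
          congr 1 with ξ; ring
      _ = -(Φ' t * m t) := by
          rw [quadForm_sub, quadForm_const_mul, quadForm_ofReal_eq_zero x ha, quadForm_mul_const]
          ring
  have hΦ'_int : IntegrableOn (fun t => Φ' t * m t) (Ioi 0) := by
    refine (integrable_quadForm (a := a) x hG).neg.congr
      (Filter.Eventually.of_forall fun t => ?_)
    rw [Pi.neg_apply, hpoint, neg_neg]
  have hform : quadForm a x (fun ξ => -(I * ξ) * levyIntegral m (I * ξ))
      = -∫ t in Ioi 0, Φ' t * m t := by
    simp only [levyIntegral, ← integral_const_mul]
    rw [← integral_quadForm x hG, ← integral_neg]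
    exact integral_congr_ae (Filter.Eventually.of_forall hpoint)
  have hm_tail : IntegrableOn m (Ioi 1) :=
    (hm_int.mono_set (Ioi_subset_Ioi zero_le_one)).congr_fun
      (fun t (ht : 1 < t) => by simp [min_eq_right ht.le]) measurableSet_Ioi
  have hderiv : ∀ t, HasDerivAt (fun t => (Φ t).re) (Φ' t).re t := fun t =>
    reCLM.hasFDerivAt.comp_hasDerivAt t (hasDerivAt_quadForm_exp x t)
  have hΦ'_cont : Continuous fun t => (Φ' t).re := by
    simp only [Φ', quadForm]
    fun_prop
  have hΦ0 : (Φ 0).re = 0 := by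
    simp only [Φ, quadForm_exp]
    simp [ha]
  have hΦ_nonneg : ∀ t, 0 < t → 0 ≤ (Φ t).re := fun t _ => by
    simp only [Φ, quadForm_exp, ofReal_re]
    exact normSq_nonneg _
  have key := setIntegral_deriv_mul_antitoneOn_nonneg hm_nonneg hm_mono hm_tail hderiv
    hΦ'_cont hΦ0 hΦ_nonneg
    (hΦ'_int.re.congr (Filter.Eventually.of_forall fun t => re_mul_ofReal _ _))
  rw [hform, neg_re, ← RCLike.re_to_complex, ← integral_re hΦ'_int, neg_nonpos]
  simpa only [RCLike.re_to_complex, re_mul_ofReal] using key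

end Levy

theorem re_quadForm_nonpos {ι : Type*} [Fintype ι] {a : ι → ℂ} (x : ι → ℝ)
    (ha : ∑ i, a i = 0) (α : ℝ) {β : ℝ} (hβ : 0 ≤ β) {m : ℝ → ℝ}
    (hm_nonneg : ∀ t, 0 < t → 0 ≤ m t)
    (hm_mono : AntitoneOn m (Ioi 0)) (hm_int : IntegrableOn (fun t => min t 1 * m t) (Ioi 0)) :
    (quadForm a x (fun ξ => -(I * ξ) * (α + β * (I * ξ) + levyIntegral m (I * ξ)))).re ≤ 0 := by
  have hsplit : (fun ξ : ℝ => -(I * ξ) * (α + β * (I * ξ) + levyIntegral m (I * ξ))) =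
      fun ξ : ℝ =>
        -(I * α) * (ξ : ℂ) + β * (ξ : ℂ) ^ 2 + -(I * ξ) * levyIntegral m (I * ξ) := by
    funext ξ
    ring_nf
    rw [I_sq]
    ring
  rw [hsplit, quadForm_add, quadForm_add, quadForm_const_mul, quadForm_const_mul,
    quadForm_ofReal_eq_zero x ha, quadForm_ofReal_sq x ha, mul_zero, zero_add, add_re]
  have hlevy := re_quadForm_levyIntegral_nonpos x ha hm_nonneg hm_mono hm_int
  have hsq : (β * (-2 * normSq (∑ i, a i * x i) : ℂ)).re ≤ 0 := by
    rw [← ofReal_ofNat, ← ofReal_neg, ← ofReal_mul, ← ofReal_mul, ofReal_re]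
    nlinarith [normSq_nonneg (∑ i, a i * x i)]
  linarith

theorem isVariogram1_re {γ : ℝ → ℂ} (h0 : 0 ≤ (γ 0).re) (hsymm : ∀ ξ, γ (-ξ) = conj (γ ξ))
    (hform : ∀ (n : ℕ) (a : Fin n → ℂ) (x : Fin n → ℝ), ∑ i, a i = 0 →
      (quadForm a x γ).re ≤ 0) :
    IsVariogram1 (fun ξ => (γ ξ).re) := by
  have heven : ∀ ξ, (γ (-ξ)).re = (γ ξ).re := fun ξ => by rw [hsymm, conj_re]
  refine ⟨h0, heven, fun n x a ha => ?_⟩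
  have hb : ∑ i, conj (a i) = 0 := by rw [← map_sum, ha, map_zero]
  change (quadForm a x fun ξ => ((γ ξ).re : ℂ)).im = 0 ∧
    (quadForm a x fun ξ => ((γ ξ).re : ℂ)).re ≤ 0
  have hre : (fun ξ => ((γ ξ).re : ℂ)) = fun ξ => γ ξ * 2⁻¹ + γ (-ξ) * 2⁻¹ := by
    funext ξ
    rw [hsymm, re_eq_add_conj]
    ring
  constructor
  · rw [← conj_eq_iff_im, conj_quadForm, ← quadForm_comp_neg]
    simp only [conj_ofReal, heven]
  · rw [hre, quadForm_add, quadForm_mul_const, quadForm_mul_const, quadForm_comp_neg, add_re,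
      ← div_eq_mul_inv, ← div_eq_mul_inv, div_ofNat_re, div_ofNat_re]
    linarith [hform n a x ha, hform n _ x hb]

theorem stmt19_general (α β : ℝ) (hβ : 0 ≤ β) (m : ℝ → ℝ)
    (hm_nonneg : ∀ t : ℝ, 0 < t → 0 ≤ m t)
    (hm_mono : AntitoneOn m (Set.Ioi 0))
    (hm_int : IntegrableOn (fun t : ℝ => min t 1 * m t) (Set.Ioi 0))
    (f : ℂ → ℂ)
    (hf : ∀ z : ℂ, 0 ≤ z.re →
      f z = (α : ℂ) + (β : ℂ) * z +
        ∫ t in Set.Ioi (0 : ℝ), (1 - Complex.exp (-z * (t : ℂ))) * (m t : ℂ)) :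
    (∀ z : ℂ, 0 ≤ z.re →
      IntegrableOn (fun t : ℝ => (1 - Complex.exp (-z * (t : ℂ))) * (m t : ℂ))
        (Set.Ioi 0)) ∧
    ((fun ξ : ℝ => -(Complex.I * ξ) * f (Complex.I * ξ)) 0 = 0) ∧
    (∀ ξ : ℝ, -(Complex.I * (-ξ : ℝ)) * f (Complex.I * (-ξ : ℝ)) =
      (starRingEnd ℂ) (-(Complex.I * ξ) * f (Complex.I * ξ))) ∧
    (∀ (n : ℕ) (x : Fin n → ℝ) (a : Fin n → ℂ), (∑ i, a i) = 0 →
      (∑ i, ∑ j, a i * (-(Complex.I * ((x i - x j : ℝ) : ℂ)) *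
        f (Complex.I * ((x i - x j : ℝ) : ℂ))) * (starRingEnd ℂ) (a j)).re ≤ 0) ∧
    IsVariogram1 (fun ξ : ℝ => -(Complex.I * ξ * f (Complex.I * ξ)).re) := by
  set γ : ℝ → ℂ := fun ξ => -(I * ξ) * f (I * ξ)
  have hγ : ∀ ξ : ℝ, γ ξ = -(I * ξ) * (α + β * (I * ξ) + levyIntegral m (I * ξ)) :=
    fun ξ => congrArg (-(I * ξ) * ·) (hf _ (by simp))
  have hsymm : ∀ ξ : ℝ, γ (-ξ) = conj (γ ξ) := fun ξ => by
    have hconj : I * ((-ξ : ℝ) : ℂ) = conj (I * ξ) := by simp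
    rw [hγ, hγ, hconj, levyIntegral_conj]
    simp
  have hform : ∀ (n : ℕ) (a : Fin n → ℂ) (x : Fin n → ℝ), ∑ i, a i = 0 →
      (quadForm a x γ).re ≤ 0 := fun n a x ha => by
    rw [show γ = _ from funext hγ]
    exact re_quadForm_nonpos x ha α hβ hm_nonneg hm_mono hm_int
  refine ⟨fun z hz => integrableOn_levyIntegrand hm_nonneg hm_mono hm_int hz, by simp [γ],
    hsymm, fun n x a ha => hform n a x ha, ?_⟩
  have h0 : 0 ≤ (γ 0).re := by simp [γ]
  simpa only [γ, neg_mul, neg_re] using isVariogram1_re h0 hsymm hform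

/-- Let α, β ≥ 0 and let m : (0,∞) → [0,∞) be monotone decreasing with
∫₀^∞ min(t,1)·m(t) dt < ∞. With f(z) = α + β·z + ∫₀^∞ (1 − e^{−zt}) m(t) dt for
Re z ≥ 0, the function γ(ξ) := −iξ·f(iξ) is conditionally negative definite, and
ξ ↦ −Re(iξ·f(iξ)) is a variogram on ℝ. -/
theorem stmt19 (α β : ℝ) (hα : 0 ≤ α) (hβ : 0 ≤ β) (m : ℝ → ℝ)
    (hm_nonneg : ∀ t : ℝ, 0 < t → 0 ≤ m t)
    (hm_mono : AntitoneOn m (Set.Ioi 0))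
    (hm_int : IntegrableOn (fun t : ℝ => min t 1 * m t) (Set.Ioi 0))
    (f : ℂ → ℂ)
    (hf : ∀ z : ℂ, 0 ≤ z.re →
      f z = (α : ℂ) + (β : ℂ) * z +
        ∫ t in Set.Ioi (0 : ℝ), (1 - Complex.exp (-z * (t : ℂ))) * (m t : ℂ)) :
    (∀ z : ℂ, 0 ≤ z.re →
      IntegrableOn (fun t : ℝ => (1 - Complex.exp (-z * (t : ℂ))) * (m t : ℂ))
        (Set.Ioi 0)) ∧
    ((fun ξ : ℝ => -(Complex.I * ξ) * f (Complex.I * ξ)) 0 = 0) ∧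
    (∀ ξ : ℝ, -(Complex.I * (-ξ : ℝ)) * f (Complex.I * (-ξ : ℝ)) =
      (starRingEnd ℂ) (-(Complex.I * ξ) * f (Complex.I * ξ))) ∧
    (∀ (n : ℕ) (x : Fin n → ℝ) (a : Fin n → ℂ), (∑ i, a i) = 0 →
      (∑ i, ∑ j, a i * (-(Complex.I * ((x i - x j : ℝ) : ℂ)) *
        f (Complex.I * ((x i - x j : ℝ) : ℂ))) * (starRingEnd ℂ) (a j)).re ≤ 0) ∧
    IsVariogram1 (fun ξ : ℝ => -(Complex.I * ξ * f (Complex.I * ξ)).re) :=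
  stmt19_general α β hβ m hm_nonneg hm_mono hm_int f hf
end
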